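/- arXiv:1605.00803 — 9 statements merged into one kernel-verified Lean document; each statement's English description precedes it below -/
import Mathlib

section
/- In a Rees matrix semiring M(I, R, Λ; P), the sandwich matrix entries satisfy p_{λμ,ij} = p_{λ0,0j} + p_{0μ,i0} for all i,j ∈ I and λ,μ ∈ Λ; consequently p_{λ,i} = p_{λ0,0i} + p_{0λ,i0} and ab + p_{λ,i} = p_{λ,i} + ab for all a,b ∈ R. -/
universe u

/-- A semiring in the sense of the paper: two semigroup operations with two-sided distributivity. -/
class PSemiring (S : Type u) extends Add S, Mul S where
  add_assoc : ∀ a b c : S, (a + b) + c = a + (b + c)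
  mul_assoc : ∀ a b c : S, (a * b) * c = a * (b * c)
  left_distrib : ∀ a b c : S, a * (b + c) = a * b + a * c
  right_distrib : ∀ a b c : S, (a + b) * c = a * c + b * c

section Defs

variable {S : Type u}

/-- `nmul n a` is the (n+1)-fold sum `a + a + ⋯ + a`; so positive multiples `na` (n ≥ 1)
are exactly the `nmul n a` for `n : ℕ`. -/
def nmul [Add S] : ℕ → S → S
  | 0, a => a
  | n+1, a => nmul n a + a

def AddIdem [Add S] (e : S) : Prop := e + e = e

def AddRegular [Add S] (a : S) : Prop := ∃ x, a = a + x + a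

def AddCompletelyRegular [Add S] [Mul S] (a : S) : Prop :=
  ∃ x, a = a + x + a ∧ a + x = x + a ∧ a * (a + x) = a + x

/-- Green's preorder `≤_L` on the additive reduct. -/
def addLeL [Add S] (a b : S) : Prop := a = b ∨ ∃ x, a = x + b

def addLeR [Add S] (a b : S) : Prop := a = b ∨ ∃ x, a = b + x

def addLeJ [Add S] (a b : S) : Prop :=
  a = b ∨ (∃ x, a = x + b) ∨ (∃ x, a = b + x) ∨ (∃ x y, a = x + b + y)

def addL [Add S] (a b : S) : Prop := addLeL a b ∧ addLeL b a
def addR [Add S] (a b : S) : Prop := addLeR a b ∧ addLeR b a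
def addJ [Add S] (a b : S) : Prop := addLeJ a b ∧ addLeJ b a
def addH [Add S] (a b : S) : Prop := addL a b ∧ addR a b

/-- `m` is the minimal index with `(m+1)a` additively regular. -/
def regIndex [Add S] (a : S) (m : ℕ) : Prop :=
  AddRegular (nmul m a) ∧ ∀ k < m, ¬ AddRegular (nmul k a)

def addLstar [Add S] (a b : S) : Prop :=
  ∃ m n, regIndex a m ∧ regIndex b n ∧ addL (nmul m a) (nmul n b)
def addRstar [Add S] (a b : S) : Prop :=
  ∃ m n, regIndex a m ∧ regIndex b n ∧ addR (nmul m a) (nmul n b)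
def addJstar [Add S] (a b : S) : Prop :=
  ∃ m n, regIndex a m ∧ regIndex b n ∧ addJ (nmul m a) (nmul n b)
def addHstar [Add S] (a b : S) : Prop := addLstar a b ∧ addRstar a b

/-- Closure of a subset under both operations. -/
def SubClosed [Add S] [Mul S] (K : Set S) : Prop :=
  ∀ a ∈ K, ∀ b ∈ K, a + b ∈ K ∧ a * b ∈ K

def addLeJIn [Add S] (K : Set S) (a b : S) : Prop :=
  a = b ∨ (∃ x ∈ K, a = x + b) ∨ (∃ x ∈ K, a = b + x) ∨ (∃ x ∈ K, ∃ y ∈ K, a = x + b + y)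

def addJIn [Add S] (K : Set S) (a b : S) : Prop := addLeJIn K a b ∧ addLeJIn K b a

def AddCRIn [Add S] [Mul S] (K : Set S) (a : S) : Prop :=
  ∃ x ∈ K, a = a + x + a ∧ a + x = x + a ∧ a * (a + x) = a + x

/-- The subset `K` is a completely simple semiring under the induced operations. -/
def CompletelySimpleOn [Add S] [Mul S] (K : Set S) : Prop :=
  SubClosed K ∧ (∀ a ∈ K, AddCRIn K a) ∧ ∀ a ∈ K, ∀ b ∈ K, addJIn K a b

/-- `K` is a rectangular skew-ring: completely simple with additive idempotents closed under `+`. -/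
def RectSkewRingOn [Add S] [Mul S] (K : Set S) : Prop :=
  CompletelySimpleOn K ∧ ∀ e ∈ K, ∀ f ∈ K, AddIdem e → AddIdem f → AddIdem (e + f)

/-- `K` is a left skew-ring: completely simple whose additive idempotents form a left zero band. -/
def LeftSkewRingOn [Add S] [Mul S] (K : Set S) : Prop :=
  CompletelySimpleOn K ∧ ∀ e ∈ K, ∀ f ∈ K, AddIdem e → AddIdem f → e + f = e

/-- `K` is a skew-ring: closed, and `(K,+)` is a group. -/
def SkewRingOn [Add S] [Mul S] (K : Set S) : Prop :=
  SubClosed K ∧ ∃ z ∈ K, (∀ a ∈ K, a + z = a ∧ z + a = a) ∧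
    ∀ a ∈ K, ∃ b ∈ K, a + b = z ∧ b + a = z

def BiIdealIn [Add S] [Mul S] (C K : Set S) : Prop :=
  K ⊆ C ∧ ∀ a ∈ K, ∀ x ∈ C, a + x ∈ K ∧ x + a ∈ K ∧ a * x ∈ K ∧ x * a ∈ K

/-- `C` is a nil-extension of its bi-ideal `K`. -/
def NilExtOn [Add S] [Mul S] (C K : Set S) : Prop :=
  BiIdealIn C K ∧ ∀ a ∈ C, ∃ n : ℕ, nmul n a ∈ K

/-- `ρ` is a b-lattice congruence on `S`. -/
def BLatticeCong [Add S] [Mul S] (ρ : S → S → Prop) : Prop :=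
  Equivalence ρ ∧ (∀ a b c d, ρ a b → ρ c d → ρ (a + c) (b + d) ∧ ρ (a * c) (b * d)) ∧
  (∀ a : S, ρ (a * a) a) ∧ (∀ a : S, ρ (a + a) a) ∧ (∀ a b : S, ρ (a + b) (b + a))

/-- `S` is a b-lattice of semirings each of whose classes satisfies `P`. -/
def BLatticeOf [Add S] [Mul S] (P : Set S → Prop) : Prop :=
  ∃ ρ : S → S → Prop, BLatticeCong ρ ∧ ∀ a : S, P {b | ρ a b}

/-- The subset `T` is a b-lattice of semirings satisfying `P` (classwise). -/
def BLatticeOfOn [Add S] [Mul S] (T : Set S) (P : Set S → Prop) : Prop :=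
  ∃ ρ : S → S → Prop,
    (∀ a ∈ T, ρ a a) ∧ (∀ a b, ρ a b → a ∈ T ∧ b ∈ T) ∧
    (∀ a b, ρ a b → ρ b a) ∧ (∀ a b c, ρ a b → ρ b c → ρ a c) ∧
    (∀ a b c d, ρ a b → ρ c d → ρ (a + c) (b + d) ∧ ρ (a * c) (b * d)) ∧
    (∀ a ∈ T, ρ (a * a) a) ∧ (∀ a ∈ T, ρ (a + a) a) ∧
    (∀ a ∈ T, ∀ b ∈ T, ρ (a + b) (b + a)) ∧
    ∀ a ∈ T, P {b | ρ a b}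

end Defs

section Iso

/-- An isomorphism of paper semirings. -/
structure PIso (S : Type u) (T : Type u) [Add S] [Mul S] [Add T] [Mul T] extends S ≃ T where
  map_add' : ∀ a b : S, toFun (a + b) = toFun a + toFun b
  map_mul' : ∀ a b : S, toFun (a * b) = toFun a * toFun b

variable (S : Type u) [PSemiring S]

def IsSkewRing : Prop :=
  ∃ z : S, (∀ a : S, a + z = a ∧ z + a = a) ∧ ∀ a : S, ∃ b : S, a + b = z ∧ b + a = z

def IsRectBandSemiring : Prop :=
  (∀ a : S, a + a = a) ∧ (∀ a : S, a * a = a) ∧ ∀ a x : S, a = a + x + a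

def IsLeftZeroSemiring : Prop :=
  (∀ a : S, a * a = a) ∧ ∀ x a : S, x + a = x

/-- A rectangular skew-ring: a completely simple semiring whose additive reduct is orthodox. -/
def IsRectSkewRing : Prop :=
  (∀ a : S, AddCompletelyRegular a) ∧ (∀ a b : S, addJ a b) ∧
    ∀ e f : S, AddIdem e → AddIdem f → AddIdem (e + f)

end Iso

section Rees

/-- The data of a Rees matrix semiring `M(I, R, Λ; P)`: a skew-ring `R`
(additive group with associative multiplication distributing over `+`),
bands `I` and `Λ` with distinguished elements `oI`, `oΛ` (playing the role of
the common element `o` of `I ∩ Λ`), and a sandwich matrix `p` satisfying the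
conditions (1)–(6) of the paper. -/
structure ReesData (I Λ R : Type*) [Semigroup I] [Semigroup Λ] [AddGroup R] [Mul R] where
  rmul_assoc : ∀ a b c : R, (a * b) * c = a * (b * c)
  rleft_distrib : ∀ a b c : R, a * (b + c) = a * b + a * c
  rright_distrib : ∀ a b c : R, (a + b) * c = a * c + b * c
  idemI : ∀ i : I, i * i = i
  idemΛ : ∀ l : Λ, l * l = l
  oI : I
  oΛ : Λ
  p : Λ → I → R
  p_right_o : ∀ l : Λ, p l oI = 0
  p_left_o : ∀ i : I, p oΛ i = 0
  cond2 : ∀ (i j k : I) (l m n : Λ),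
    p (l * m) (k * j) = p (l * m) (i * j) - p (n * m) (i * j) + p (n * m) (k * j)
  cond3 : ∀ (i j k : I) (l m n : Λ),
    p (m * l) (j * k) = p (m * l) (j * i) - p (m * n) (j * i) + p (m * n) (j * k)
  cond4 : ∀ (a : R) (l : Λ) (i : I), a * p l i = 0 ∧ p l i * a = 0
  cond5 : ∀ (a b : R) (i : I) (m : Λ),
    a * b + p (oΛ * m) (i * oI) = p (oΛ * m) (i * oI) + a * b
  cond6 : ∀ (a b : R) (j : I) (l : Λ),
    a * b + p (l * oΛ) (oI * j) = p (l * oΛ) (oI * j) + a * b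

variable {I Λ R : Type*} [Semigroup I] [Semigroup Λ] [AddGroup R] [Mul R]

/-- Addition of the Rees matrix semiring on `I × R × Λ`:
`(i,a,λ) + (j,b,μ) = (i, a + p λ j + b, μ)`. -/
def radd (D : ReesData I Λ R) (x y : I × R × Λ) : I × R × Λ :=
  (x.1, x.2.1 + D.p x.2.2 y.1 + y.2.1, y.2.2)

/-- Multiplication of the Rees matrix semiring on `I × R × Λ`:
`(i,a,λ) · (j,b,μ) = (ij, -p (λμ) (ij) + ab, λμ)`. -/
def rmul (D : ReesData I Λ R) (x y : I × R × Λ) : I × R × Λ :=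
  (x.1 * y.1, -D.p (x.2.2 * y.2.2) (x.1 * y.1) + x.2.1 * y.2.1, x.2.2 * y.2.2)

end Rees

/-- the sandwich-matrix identities of the Corollary. -/
theorem stmt1 {I Λ R : Type*} [Semigroup I] [Semigroup Λ] [AddGroup R] [Mul R]
    (D : ReesData I Λ R) :
    (∀ (i j : I) (l m : Λ),
      D.p (l * m) (i * j) = D.p (l * D.oΛ) (D.oI * j) + D.p (D.oΛ * m) (i * D.oI)) ∧
    (∀ (i : I) (l : Λ),
      D.p l i = D.p (l * D.oΛ) (D.oI * i) + D.p (D.oΛ * l) (i * D.oI)) ∧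
    (∀ (a b : R) (i : I) (l : Λ), a * b + D.p l i = D.p l i + a * b) := by
  -- key reduction lemmas
  have hL : ∀ (j : I) (l m : Λ), D.p (l * m) (D.oI * j) = D.p (l * D.oΛ) (D.oI * j) := by
    intro j l m
    have h := D.cond3 D.oI D.oI j m l D.oΛ
    -- h : p (l*m) (oI*j) = p (l*m) (oI*oI) - p (l*oΛ) (oI*oI) + p (l*oΛ) (oI*j)
    rw [D.idemI D.oI, D.p_right_o, D.p_right_o] at h
    simpa using h
  have hR : ∀ (i j : I) (m : Λ), D.p (D.oΛ * m) (i * j) = D.p (D.oΛ * m) (i * D.oI) := by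
    intro i j m
    have h := D.cond3 D.oI i j D.oΛ D.oΛ D.oΛ
    -- h : p (oΛ*oΛ) (i*j) = p (oΛ*oΛ) (i*oI) - p (oΛ*oΛ) (i*oI) + p (oΛ*oΛ) (i*j)
    have h := D.cond3 D.oI i j m D.oΛ D.oΛ
    rw [D.idemΛ D.oΛ, D.p_left_o, D.p_left_o] at h
    simpa using h
  have key : ∀ (i j : I) (l m : Λ),
      D.p (l * m) (i * j) = D.p (l * D.oΛ) (D.oI * j) + D.p (D.oΛ * m) (i * D.oI) := by
    intro i j l m
    have h := D.cond2 D.oI j i l m D.oΛ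
    -- h : p (l*m) (i*j) = p (l*m) (oI*j) - p (oΛ*m) (oI*j) + p (oΛ*m) (i*j)
    rw [hL j l m, hR i j m] at h
    have h0 : D.p (D.oΛ * m) (D.oI * j) = 0 := by
      rw [hL j D.oΛ m, D.idemΛ D.oΛ, D.p_left_o]
    rw [h0] at h
    simpa using h
  refine ⟨key, ?_, ?_⟩
  · intro i l
    have := key i i l l
    rwa [D.idemI i, D.idemΛ l] at this
  · intro a b i l
    have hp : D.p l i = D.p (l * D.oΛ) (D.oI * i) + D.p (D.oΛ * l) (i * D.oI) := by
      have := key i i l l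
      rwa [D.idemI i, D.idemΛ l] at this
    have h5 := D.cond5 a b i l
    have h6 := D.cond6 a b i l
    rw [hp]
    calc a * b + (D.p (l * D.oΛ) (D.oI * i) + D.p (D.oΛ * l) (i * D.oI))
        = (a * b + D.p (l * D.oΛ) (D.oI * i)) + D.p (D.oΛ * l) (i * D.oI) := by
          rw [add_assoc]
      _ = (D.p (l * D.oΛ) (D.oI * i) + a * b) + D.p (D.oΛ * l) (i * D.oI) := by rw [h6]
      _ = D.p (l * D.oΛ) (D.oI * i) + (a * b + D.p (D.oΛ * l) (i * D.oI)) := by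
          rw [add_assoc]
      _ = D.p (l * D.oΛ) (D.oI * i) + (D.p (D.oΛ * l) (i * D.oI) + a * b) := by rw [h5]
      _ = D.p (l * D.oΛ) (D.oI * i) + D.p (D.oΛ * l) (i * D.oI) + a * b := by
          rw [add_assoc]
end

section
/- The Rees matrix semiring M(I, R, Λ; P) is a semiring: both operations are associative and multiplication distributes over addition on both sides. -/
universe u

section ReesHelp

variable {I Λ R : Type*} [Semigroup I] [Semigroup Λ] [AddGroup R] [Mul R]

lemma rees_zero_mul (D : ReesData I Λ R) (c : R) : (0 : R) * c = 0 := by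
  have h : (0 : R) * c = 0 * c + 0 * c := by
    simpa using D.rright_distrib 0 0 c
  nth_rewrite 1 [← add_zero ((0 : R) * c)] at h
  exact (add_left_cancel h).symm

lemma rees_mul_zero (D : ReesData I Λ R) (c : R) : c * (0 : R) = 0 := by
  have h : c * (0 : R) = c * 0 + c * 0 := by
    simpa using D.rleft_distrib c 0 0
  nth_rewrite 1 [← add_zero (c * (0 : R))] at h
  exact (add_left_cancel h).symm

lemma rees_neg_p_mul (D : ReesData I Λ R) (l : Λ) (i : I) (c : R) :
    (-D.p l i) * c = 0 := by
  have h := D.rright_distrib (-D.p l i) (D.p l i) c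
  rw [neg_add_cancel, rees_zero_mul D, (D.cond4 c l i).2, add_zero] at h
  exact h.symm

lemma rees_mul_neg_p (D : ReesData I Λ R) (l : Λ) (i : I) (c : R) :
    c * (-D.p l i) = 0 := by
  have h := D.rleft_distrib c (-D.p l i) (D.p l i)
  rw [neg_add_cancel, rees_mul_zero D, (D.cond4 c l i).1, add_zero] at h
  exact h.symm

lemma rees_p_oo (D : ReesData I Λ R) (m : Λ) (k : I) :
    D.p (D.oΛ * m) (D.oI * k) = 0 := by
  have h := D.cond3 D.oI D.oI k m D.oΛ D.oΛ
  simp only [D.idemI, D.idemΛ, D.p_right_o, D.p_left_o] at h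
  simpa using h

lemma rees_p_decomp (D : ReesData I Λ R) (l m : Λ) (i k : I) :
    D.p (l * m) (i * k) = D.p (l * D.oΛ) (D.oI * k) + D.p (D.oΛ * m) (i * D.oI) := by
  have h1 := D.cond2 D.oI k i l m D.oΛ
  rw [rees_p_oo D] at h1
  have h2 := D.cond3 D.oI i k m D.oΛ D.oΛ
  simp only [D.idemΛ, D.p_left_o] at h2
  have h3 := D.cond3 D.oI D.oI k m l D.oΛ
  simp only [D.idemI, D.p_right_o] at h3
  rw [h1, h2, h3]
  simp

lemma rees_key_comm (D : ReesData I Λ R) (a b : R) (l m : Λ) (i k : I) :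
    AddCommute (a * b) (D.p (l * m) (i * k)) := by
  rw [rees_p_decomp D]
  exact AddCommute.add_right (D.cond6 a b k l) (D.cond5 a b i m)

lemma rees_neg_rearr {w v u x : R} (h : w = u - v + x) :
    -w = -x + v - u := by
  rw [h]
  simp [sub_eq_add_neg, neg_add_rev, add_assoc]

lemma rees_rearr (w v u ab ac : R)
    (h1 : AddCommute ab v) (h2 : AddCommute ab u) :
    (-w + v - u) + (ab + ac) = ((-w + ab) + v) + (-u + ac) := by
  simp only [sub_eq_add_neg, add_assoc]
  congr 1
  rw [← add_assoc (-u) ab ac, h2.neg_right.symm.eq, add_assoc ab (-u) ac,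
      ← add_assoc v ab, h1.symm.eq, add_assoc]

end ReesHelp

/-- the Rees matrix operations make `I × R × Λ` a semiring. -/
theorem stmt2 {I Λ R : Type*} [Semigroup I] [Semigroup Λ] [AddGroup R] [Mul R]
    (D : ReesData I Λ R) :
    (∀ x y z : I × R × Λ, radd D (radd D x y) z = radd D x (radd D y z)) ∧
    (∀ x y z : I × R × Λ, rmul D (rmul D x y) z = rmul D x (rmul D y z)) ∧
    (∀ x y z : I × R × Λ, rmul D x (radd D y z) = radd D (rmul D x y) (rmul D x z)) ∧
    (∀ x y z : I × R × Λ, rmul D (radd D x y) z = radd D (rmul D x z) (rmul D y z)) := by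
  refine ⟨?_, ?_, ?_, ?_⟩
  · rintro ⟨i, a, l⟩ ⟨j, b, m⟩ ⟨k, c, n⟩
    simp only [radd, Prod.mk.injEq, true_and, and_true]
    simp [add_assoc]
  · rintro ⟨i, a, l⟩ ⟨j, b, m⟩ ⟨k, c, n⟩
    simp only [rmul, Prod.mk.injEq]
    refine ⟨mul_assoc i j k, ?_, mul_assoc l m n⟩
    rw [D.rright_distrib, D.rleft_distrib, rees_neg_p_mul D, rees_mul_neg_p D,
      mul_assoc i j k, mul_assoc l m n, zero_add, zero_add, D.rmul_assoc]
  · rintro ⟨i, a, l⟩ ⟨j, b, m⟩ ⟨k, c, n⟩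
    simp only [radd, rmul, Prod.mk.injEq, true_and, and_true]
    rw [D.rleft_distrib, D.rleft_distrib, (D.cond4 a m k).1, add_zero]
    have h := D.cond3 k i j n l m
    rw [rees_neg_rearr h]
    exact rees_rearr _ _ _ _ _ (rees_key_comm D a b l m i k) (rees_key_comm D a b l n i k)
  · rintro ⟨i, a, l⟩ ⟨j, b, m⟩ ⟨k, c, n⟩
    simp only [radd, rmul, Prod.mk.injEq, true_and, and_true]
    rw [D.rright_distrib, D.rright_distrib, (D.cond4 c l j).2, add_zero]
    have h := D.cond2 j k i m n l
    rw [rees_neg_rearr h]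
    exact rees_rearr _ _ _ _ _ (rees_key_comm D a c l n j k) (rees_key_comm D a c m n j k)
end

section
/- A semiring is a rectangular skew-ring if and only if it is isomorphic to the direct product of a rectangular band semiring and a skew-ring. -/
universe u

namespace S5

variable {S : Type u} [PSemiring S]

theorem aA (a b c : S) : a + b + c = a + (b + c) := PSemiring.add_assoc a b c
theorem mA (a b c : S) : a * b * c = a * (b * c) := PSemiring.mul_assoc a b c
theorem ld (a b c : S) : a * (b + c) = a * b + a * c := PSemiring.left_distrib a b c
theorem rd (a b c : S) : (a + b) * c = a * c + b * c := PSemiring.right_distrib a b c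

structure H (S : Type u) [PSemiring S] : Prop where
  cr : ∀ a : S, AddCompletelyRegular a
  j : ∀ a b : S, addJ a b
  idm : ∀ e f : S, AddIdem e → AddIdem f → AddIdem (e + f)

theorem H.idem {S : Type u} [PSemiring S] (h : H S) {e f : S}
    (he : e + e = e) (hf : f + f = f) : (e + f) + (e + f) = e + f := h.idm e f he hf

variable (h : H S)

noncomputable def w (a : S) : S := (h.cr a).choose

theorem w1 (a : S) : a = a + w h a + a := (h.cr a).choose_spec.1
theorem w2 (a : S) : a + w h a = w h a + a := (h.cr a).choose_spec.2.1
theorem w3 (a : S) : a * (a + w h a) = a + w h a := (h.cr a).choose_spec.2.2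

noncomputable def ea (a : S) : S := a + w h a

theorem ea_idem (a : S) : ea h a + ea h a = ea h a := by
  show (a + w h a) + (a + w h a) = a + w h a
  calc (a + w h a) + (a + w h a) = (a + w h a + a) + w h a := by simp only [aA]
  _ = a + w h a := by rw [← w1]

theorem ea_add (a : S) : ea h a + a = a := (w1 h a).symm

theorem add_ea (a : S) : a + ea h a = a := by
  show a + (a + w h a) = a
  rw [w2, ← aA]
  exact (w1 h a).symm

theorem mul_ea (a : S) : a * ea h a = ea h a := w3 h a

/-- Primitivity of additive idempotents. -/
theorem prim (h : H S) {e f : S} (he : e + e = e) (hf : f + f = f)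
    (hfe : f + e = f) (hef : e + f = f) : e = f := by
  obtain ⟨x, y, hxy⟩ : ∃ x y, e = x + f + y := by
    rcases (h.j e f).1 with h1 | ⟨x, h1⟩ | ⟨y, h1⟩ | ⟨x, y, h1⟩
    · exact ⟨f, f, by rw [hf, hf]; exact h1⟩
    · exact ⟨x, f, by rw [aA, hf]; exact h1⟩
    · exact ⟨f, y, by rw [hf]; exact h1⟩
    · exact ⟨x, y, h1⟩
  have haf : (e + x + f) + f = e + x + f := by rw [aA (e+x) f f, hf]
  have hab : (e + x + f) + (f + y + e) = e := by
    have h2 : ((e+x)+f)+f = (e+x)+f := haf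
    calc (e+x+f)+(f+y+e) = ((((e+x)+f)+f)+y)+e := by simp only [← aA]
    _ = (((e+x)+f)+y)+e := by rw [h2]
    _ = e + ((x+f+y)+e) := by simp only [aA]
    _ = e + (e + e) := by rw [← hxy]
    _ = e := by rw [he, he]
  have hAa : ea h (e+x+f) + (e+x+f) = (e+x+f) := ea_add h _
  have hAe : ea h (e+x+f) + e = e := by
    calc ea h (e+x+f) + e = ea h (e+x+f) + ((e+x+f)+(f+y+e)) :=
          congrArg (ea h (e+x+f) + ·) hab.symm
    _ = (ea h (e+x+f) + (e+x+f)) + (f+y+e) := (aA _ _ _).symm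
    _ = (e+x+f)+(f+y+e) := by rw [hAa]
    _ = e := hab
  have hAf : ea h (e+x+f) + f = ea h (e+x+f) := by
    show ((e+x+f) + w h (e+x+f)) + f = (e+x+f) + w h (e+x+f)
    rw [w2, aA, haf]
  have heA : e = ea h (e+x+f) := by
    calc e = ea h (e+x+f) + e := hAe.symm
    _ = (ea h (e+x+f) + f) + e := by rw [hAf]
    _ = ea h (e+x+f) + (f + e) := aA _ _ _
    _ = ea h (e+x+f) + f := congrArg (ea h (e+x+f) + ·) hfe
    _ = ea h (e+x+f) := hAf
  calc e = ea h (e+x+f) := heA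
  _ = ea h (e+x+f) + f := hAf.symm
  _ = e + f := by rw [← heA]
  _ = f := hef

/-- Uniqueness of the idempotent acting as identity on `c`. -/
theorem U {u c : S} (hu : u + u = u) (huc : u + c = c) (hcu : c + u = c) :
    ea h c = u := by
  have h1 : ea h c + u = ea h c := by
    show (c + w h c) + u = c + w h c
    rw [w2, aA, hcu]
  have h2 : u + ea h c = ea h c := by
    show u + (c + w h c) = c + w h c
    rw [← aA, huc]
  exact (prim h hu (ea_idem h c) h1 h2).symm

theorem ea_of_idem {e : S} (he : e + e = e) : ea h e = e := U h he he he

theorem mul_idem (h : H S) {e : S} (he : e + e = e) : e * e = e := by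
  have t := mul_ea h e
  rw [ea_of_idem h he] at t
  exact t

/-- The additive idempotents form a rectangular band. -/
theorem rect (h : H S) {e f : S} (he : e + e = e) (hf : f + f = f) : e + f + e = e := by
  have hg : (e+f+e) + (e+f+e) = e+f+e := h.idem (h.idem he hf) he
  have hge : (e+f+e) + e = e+f+e := by rw [aA (e+f) e e, he]
  have heg : e + (e+f+e) = e+f+e := by
    calc e + (e+f+e) = ((e+e)+f)+e := by simp only [← aA]
    _ = e+f+e := by rw [he]
  exact (prim h he hg hge heg).symm

theorem collapse (h : H S) {p q r : S} (hp : p + p = p) (hq : q + q = q) (hr : r + r = r)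
    (t : S) : p + (q + (r + t)) = p + (r + t) := by
  symm
  calc p + (r + t) = (p+(q+r)+p) + (r+t) := by rw [rect h hp (h.idem hq hr)]
  _ = p + (q + ((r + p + r) + t)) := by simp only [aA]
  _ = p + (q + (r + t)) := by rw [rect h hr hp]

/-- The master identity: additive idempotents can be deleted in interior sums. -/
theorem mi (h : H S) {e : S} (he : e + e = e) (a b : S) : a + (e + b) = a + b := by
  calc a + (e + b) = (a + ea h a) + (e + (ea h b + b)) := by rw [add_ea, ea_add]
  _ = a + (ea h a + (e + (ea h b + b))) := by simp only [aA]
  _ = a + (ea h a + (ea h b + b)) := by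
        rw [collapse h (ea_idem h a) he (ea_idem h b) b]
  _ = (a + ea h a) + (ea h b + b) := by simp only [aA]
  _ = a + b := by rw [add_ea, ea_add]

theorem ea_add_hom (a b : S) : ea h (a + b) = ea h a + ea h b := by
  refine U h (h.idem (ea_idem h a) (ea_idem h b)) ?_ ?_
  · calc (ea h a + ea h b) + (a+b) = ea h a + (ea h b + (a + b)) := aA _ _ _
    _ = ea h a + (a + b) := mi h (ea_idem h b) _ _
    _ = (ea h a + a) + b := (aA _ _ _).symm
    _ = a + b := by rw [ea_add]
  · calc (a+b) + (ea h a + ea h b) = (a+b) + ea h b := mi h (ea_idem h a) _ _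
    _ = a + (b + ea h b) := aA _ _ _
    _ = a + b := by rw [add_ea]

theorem mul_ea_idem (a b : S) : a * ea h b + a * ea h b = a * ea h b := by
  rw [← ld, ea_idem]

theorem ea_mul_idem (a b : S) : ea h a * b + ea h a * b = ea h a * b := by
  rw [← rd, ea_idem]

theorem ea_mul1 (a b : S) : ea h (a * b) = a * ea h b := by
  refine U h (mul_ea_idem h a b) ?_ ?_
  · rw [← ld, ea_add]
  · rw [← ld, add_ea]

theorem ea_mul_hom (a b : S) : ea h (a * b) = ea h a * ea h b := by
  have h1 : ea h (a * ea h b) = ea h a * ea h b := by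
    refine U h ?_ ?_ ?_
    · rw [← rd, ea_idem]
    · rw [← rd, ea_add]
    · rw [← rd, add_ea]
  have h2 : ea h (a * ea h b) = a * ea h b := ea_of_idem h (mul_ea_idem h a b)
  rw [ea_mul1 h a b, ← h2, h1]

/-- The rectangular band semiring of additive idempotents. -/
def Et (S : Type u) [PSemiring S] : Type u := {e : S // e + e = e}

/-- The skew-ring component: the additive H-class of the idempotent `z`. -/
def Gt (z : S) : Type u := {g : S // z + g = g ∧ g + z = g}

noncomputable def instEt (h : H S) : PSemiring (Et S) where
  add a b := ⟨a.1 + b.1, h.idem a.2 b.2⟩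
  mul a b := ⟨a.1 * b.1, by rw [← rd, a.2]⟩
  add_assoc a b c := Subtype.ext (aA a.1 b.1 c.1)
  mul_assoc a b c := Subtype.ext (mA a.1 b.1 c.1)
  left_distrib a b c := Subtype.ext (ld a.1 b.1 c.1)
  right_distrib a b c := Subtype.ext (rd a.1 b.1 c.1)

theorem gmem_add {z g k : S} (hg : z + g = g ∧ g + z = g) (hk : z + k = k ∧ k + z = k) :
    z + (g + k) = g + k ∧ (g + k) + z = g + k := by
  constructor
  · rw [← aA, hg.1]
  · rw [aA, hk.2]

theorem gmem_mul {z : S} (hz : z + z = z) (t : S) :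
    z + (z + t + z) = z + t + z ∧ (z + t + z) + z = z + t + z := by
  constructor
  · calc z + (z + t + z) = ((z+z)+t)+z := by simp only [← aA]
    _ = z + t + z := by rw [hz]
  · rw [aA (z+t) z z, hz]

theorem zmul_idem {z : S} (hz : z + z = z) (t : S) : z * t + z * t = z * t := by
  rw [← rd, hz]

theorem mulz_idem {z : S} (hz : z + z = z) (t : S) : t * z + t * z = t * z := by
  rw [← ld, hz]

theorem lem1 (h : H S) {z : S} (hz : z + z = z) (t k : S) :
    z + (z + t + z) * k + z = z + t * k + z := by
  calc z + (z + t + z) * k + z = z + (z*k + (t*k + (z*k + z))) := by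
        simp only [rd, aA]
  _ = z + (t*k + (z*k + z)) := mi h (zmul_idem hz k) _ _
  _ = z + (t*k + z) := congrArg (z + ·) (mi h (zmul_idem hz k) _ _)
  _ = z + t * k + z := (aA _ _ _).symm

theorem lem2 (h : H S) {z : S} (hz : z + z = z) (g t : S) :
    z + g * (z + t + z) + z = z + g * t + z := by
  calc z + g * (z + t + z) + z = z + (g*z + (g*t + (g*z + z))) := by
        simp only [ld, aA]
  _ = z + (g*t + (g*z + z)) := mi h (mulz_idem hz g) _ _
  _ = z + (g*t + z) := congrArg (z + ·) (mi h (mulz_idem hz g) _ _)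
  _ = z + g * t + z := (aA _ _ _).symm


noncomputable def instGt (h : H S) (a0 : S) : PSemiring (Gt (ea h a0)) where
  add a b := ⟨a.1 + b.1, gmem_add a.2 b.2⟩
  mul a b := ⟨ea h a0 + a.1 * b.1 + ea h a0, gmem_mul (ea_idem h a0) _⟩
  add_assoc a b c := Subtype.ext (aA a.1 b.1 c.1)
  mul_assoc a b c := Subtype.ext <| by
    show ea h a0 + (ea h a0 + a.1 * b.1 + ea h a0) * c.1 + ea h a0
       = ea h a0 + a.1 * (ea h a0 + b.1 * c.1 + ea h a0) + ea h a0
    rw [lem1 h (ea_idem h a0), lem2 h (ea_idem h a0), mA]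
  left_distrib a b c := Subtype.ext <| by
    show ea h a0 + a.1 * (b.1 + c.1) + ea h a0
       = (ea h a0 + a.1 * b.1 + ea h a0) + (ea h a0 + a.1 * c.1 + ea h a0)
    have hz := ea_idem h a0
    symm
    calc (ea h a0 + a.1 * b.1 + ea h a0) + (ea h a0 + a.1 * c.1 + ea h a0)
        = ea h a0 + (a.1*b.1 + (ea h a0 + (ea h a0 + (a.1*c.1 + ea h a0)))) := by
          simp only [aA]
    _ = ea h a0 + (a.1*b.1 + (ea h a0 + (a.1*c.1 + ea h a0))) :=
          congrArg (ea h a0 + ·) (mi h hz _ _)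
    _ = ea h a0 + (a.1*b.1 + (a.1*c.1 + ea h a0)) :=
          congrArg (ea h a0 + ·) (mi h hz _ _)
    _ = ea h a0 + a.1 * (b.1 + c.1) + ea h a0 := by simp only [ld, aA]
  right_distrib a b c := Subtype.ext <| by
    show ea h a0 + (a.1 + b.1) * c.1 + ea h a0
       = (ea h a0 + a.1 * c.1 + ea h a0) + (ea h a0 + b.1 * c.1 + ea h a0)
    have hz := ea_idem h a0
    symm
    calc (ea h a0 + a.1 * c.1 + ea h a0) + (ea h a0 + b.1 * c.1 + ea h a0)
        = ea h a0 + (a.1*c.1 + (ea h a0 + (ea h a0 + (b.1*c.1 + ea h a0)))) := by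
          simp only [aA]
    _ = ea h a0 + (a.1*c.1 + (ea h a0 + (b.1*c.1 + ea h a0))) :=
          congrArg (ea h a0 + ·) (mi h hz _ _)
    _ = ea h a0 + (a.1*c.1 + (b.1*c.1 + ea h a0)) :=
          congrArg (ea h a0 + ·) (mi h hz _ _)
    _ = ea h a0 + (a.1 + b.1) * c.1 + ea h a0 := by simp only [rd, aA]

/-! ### The skew-ring structure on `Gt` -/

theorem gneg_add (h : H S) (g : S) : g + (w h g + g + w h g) = ea h g := by
  calc g + (w h g + g + w h g) = ((g + w h g) + g) + w h g := by simp only [← aA]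
  _ = g + w h g := by rw [← w1 h g]

theorem add_gneg (h : H S) (g : S) : (w h g + g + w h g) + g = ea h g := by
  calc (w h g + g + w h g) + g = w h g + ((g + w h g) + g) := by simp only [aA]
  _ = w h g + g := by rw [← w1 h g]
  _ = ea h g := (w2 h g).symm

theorem ea_gneg (h : H S) (g : S) :
    ea h g + (w h g + g + w h g) = w h g + g + w h g := by
  have hw : ea h g = w h g + g := w2 h g
  calc ea h g + (w h g + g + w h g) = (w h g + g) + (w h g + g + w h g) := by rw [hw]
  _ = (w h g + ((g + w h g) + g)) + w h g := by simp only [aA]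
  _ = (w h g + g) + w h g := by rw [← w1 h g]

theorem gneg_ea (h : H S) (g : S) :
    (w h g + g + w h g) + ea h g = w h g + g + w h g := by
  show (w h g + g + w h g) + (g + w h g) = w h g + g + w h g
  calc (w h g + g + w h g) + (g + w h g)
      = (w h g + ((g + w h g) + g)) + w h g := by simp only [aA]
  _ = (w h g + g) + w h g := by rw [← w1 h g]

theorem ea_of_mem (h : H S) {z g : S} (hz : z + z = z)
    (hg : z + g = g ∧ g + z = g) : ea h g = z := U h hz hg.1 hg.2

theorem skew (h : H S) (a0 : S) : @IsSkewRing (Gt (ea h a0)) (instGt h a0) := by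
  letI := instGt h a0
  refine ⟨⟨ea h a0, ea_idem h a0, ea_idem h a0⟩,
    fun a => ⟨Subtype.ext a.2.2, Subtype.ext a.2.1⟩, fun a => ?_⟩
  have hz := ea_idem h a0
  have heag : ea h a.1 = ea h a0 := ea_of_mem h hz a.2
  refine ⟨⟨w h a.1 + a.1 + w h a.1, ?_, ?_⟩, Subtype.ext ?_, Subtype.ext ?_⟩
  · have t := ea_gneg h a.1
    rw [heag] at t
    exact t
  · have t := gneg_ea h a.1
    rw [heag] at t
    exact t
  · show a.1 + (w h a.1 + a.1 + w h a.1) = ea h a0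
    rw [gneg_add h a.1, heag]
  · show (w h a.1 + a.1 + w h a.1) + a.1 = ea h a0
    rw [add_gneg h a.1, heag]

theorem rbs (h : H S) : @IsRectBandSemiring (Et S) (instEt h) := by
  letI := instEt h
  exact ⟨fun a => Subtype.ext a.2, fun a => Subtype.ext (mul_idem h a.2),
    fun a x => Subtype.ext (rect h a.2 x.2).symm⟩

/-! ### The isomorphism -/

theorem linv (h : H S) (a0 a : S) :
    ea h a + (ea h a0 + a + ea h a0) + ea h a = a := by
  calc ea h a + (ea h a0 + a + ea h a0) + ea h a
      = ea h a + (ea h a0 + (a + (ea h a0 + ea h a))) := by simp only [aA]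
  _ = ea h a + (a + (ea h a0 + ea h a)) := mi h (ea_idem h a0) _ _
  _ = ea h a + (a + ea h a) := congrArg (ea h a + ·) (mi h (ea_idem h a0) _ _)
  _ = (ea h a + a) + ea h a := (aA _ _ _).symm
  _ = a + ea h a := by rw [ea_add]
  _ = a := add_ea h a

theorem rinv1 (h : H S) {e : S} (he : e + e = e) (g : S) : ea h (e + g + e) = e := by
  refine U h he ?_ ?_
  · calc e + (e+g+e) = ((e+e)+g)+e := by simp only [← aA]
    _ = e+g+e := by rw [he]
  · rw [aA (e+g) e e, he]

theorem rinv2 (h : H S) {z e g : S} (he : e + e = e)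
    (hg : z + g = g ∧ g + z = g) : z + (e + g + e) + z = g := by
  calc z + (e+g+e) + z = z + (e + (g + (e + z))) := by simp only [aA]
  _ = z + (g + (e + z)) := mi h he _ _
  _ = z + (g + z) := congrArg (z + ·) (mi h he _ _)
  _ = (z + g) + z := (aA _ _ _).symm
  _ = g := by rw [hg.1, hg.2]

theorem madd2 (h : H S) {z : S} (hz : z + z = z) (a b : S) :
    (z + a + z) + (z + b + z) = z + (a + b) + z := by
  calc (z+a+z)+(z+b+z) = z + (a + (z + (z + (b + z)))) := by simp only [aA]
  _ = z + (a + (z + (b + z))) := congrArg (z + ·) (mi h hz _ _)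
  _ = z + (a + (b + z)) := congrArg (z + ·) (mi h hz _ _)
  _ = z + (a+b) + z := by simp only [aA]

theorem mmul2 (h : H S) {z : S} (hz : z + z = z) (a b : S) :
    z + (z + a + z) * (z + b + z) + z = z + a * b + z := by
  rw [lem1 h hz, lem2 h hz]

/-! ### Assembly of the forward direction -/

theorem fwd (h : H S) (a0 : S) :
    ∃ (B R : Type u) (_ : PSemiring B) (_ : PSemiring R),
      IsRectBandSemiring B ∧ IsSkewRing R ∧ Nonempty (PIso S (B × R)) := by
  refine ⟨Et S, Gt (ea h a0), instEt h, instGt h a0, rbs h, skew h a0, ⟨?_⟩⟩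
  letI := instEt h
  letI := instGt h a0
  refine
    { toFun := fun a => (⟨ea h a, ea_idem h a⟩, ⟨ea h a0 + a + ea h a0,
        gmem_mul (ea_idem h a0) a⟩),
      invFun := fun p => p.1.1 + p.2.1 + p.1.1,
      left_inv := fun a => linv h a0 a,
      right_inv := ?_, map_add' := ?_, map_mul' := ?_ }
  · rintro ⟨⟨e, he⟩, ⟨g, hg⟩⟩
    refine Prod.ext ?_ ?_
    · exact Subtype.ext (rinv1 h he g)
    · exact Subtype.ext (rinv2 h he hg)
  · intro a b
    refine Prod.ext ?_ ?_
    · exact Subtype.ext (ea_add_hom h a b)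
    · exact Subtype.ext (madd2 h (ea_idem h a0) a b).symm
  · intro a b
    refine Prod.ext ?_ ?_
    · exact Subtype.ext (ea_mul_hom h a b)
    · exact Subtype.ext (mmul2 h (ea_idem h a0) a b).symm

/-! ### The degenerate (empty) case -/

def punitPS : PSemiring PUnit.{u+1} where
  add _ _ := .unit
  mul _ _ := .unit
  add_assoc _ _ _ := rfl
  mul_assoc _ _ _ := rfl
  left_distrib _ _ _ := rfl
  right_distrib _ _ _ := rfl

theorem punit_skew : @IsSkewRing PUnit.{u+1} punitPS :=
  ⟨.unit, fun _ => ⟨Subsingleton.elim _ _, Subsingleton.elim _ _⟩,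
    fun _ => ⟨.unit, Subsingleton.elim _ _, Subsingleton.elim _ _⟩⟩

theorem empty_case (hS : IsEmpty S) :
    ∃ (B R : Type u) (_ : PSemiring B) (_ : PSemiring R),
      IsRectBandSemiring B ∧ IsSkewRing R ∧ Nonempty (PIso S (B × R)) := by
  refine ⟨S, PUnit.{u+1}, inferInstance, punitPS, ?_, punit_skew, ⟨?_⟩⟩
  · exact ⟨fun a => hS.elim a, fun a => hS.elim a, fun a _ => hS.elim a⟩
  · letI := punitPS
    exact
      { toFun := fun a => (a, .unit), invFun := fun p => p.1,
        left_inv := fun _ => rfl,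
        right_inv := fun p => Prod.ext rfl (Subsingleton.elim _ _),
        map_add' := fun _ _ => Prod.ext rfl (Subsingleton.elim _ _),
        map_mul' := fun _ _ => Prod.ext rfl (Subsingleton.elim _ _) }

/-! ### The reverse direction -/

theorem idem_eq_zero {R : Type u} [PSemiring R] {z : R}
    (hz : ∀ a : R, a + z = a ∧ z + a = a)
    (hinv : ∀ a : R, ∃ b, a + b = z ∧ b + a = z) {t : R} (ht : t + t = t) :
    t = z := by
  obtain ⟨b, hb1, _⟩ := hinv t
  calc t = t + z := ((hz t).1).symm
  _ = t + (t + b) := by rw [hb1]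
  _ = (t + t) + b := (aA _ _ _).symm
  _ = t + b := by rw [ht]
  _ = z := hb1

theorem mul_zero' {R : Type u} [PSemiring R] {z : R}
    (hz : ∀ a : R, a + z = a ∧ z + a = a)
    (hinv : ∀ a : R, ∃ b, a + b = z ∧ b + a = z) (r : R) : r * z = z := by
  refine idem_eq_zero hz hinv ?_
  rw [← ld, (hz z).1]

theorem reverse {S B R : Type u} [PSemiring S] (iB : PSemiring B) (iR : PSemiring R)
    (hB : IsRectBandSemiring B) (hR : IsSkewRing R) (φ : PIso S (B × R)) :
    IsRectSkewRing S := by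
  obtain ⟨hB1, hB2, hB3⟩ := hB
  obtain ⟨z, hz, hinv⟩ := hR
  have inj := φ.toEquiv.injective
  have hf : ∀ a b : S, φ.toEquiv (a + b) = φ.toEquiv a + φ.toEquiv b := φ.map_add'
  have hm : ∀ a b : S, φ.toEquiv (a * b) = φ.toEquiv a * φ.toEquiv b := φ.map_mul'
  refine ⟨?_, ?_, ?_⟩
  · -- completely regular
    intro a
    obtain ⟨r', hr1, hr2⟩ := hinv (φ.toEquiv a).2
    refine ⟨φ.toEquiv.symm ((φ.toEquiv a).1, r'), ?_, ?_, ?_⟩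
    · apply inj
      rw [hf, hf, Equiv.apply_symm_apply]
      refine (Prod.ext ?_ ?_).symm
      · show ((φ.toEquiv a).1 + (φ.toEquiv a).1) + (φ.toEquiv a).1 = (φ.toEquiv a).1
        rw [hB1, hB1]
      · show ((φ.toEquiv a).2 + r') + (φ.toEquiv a).2 = (φ.toEquiv a).2
        rw [hr1, (hz _).2]
    · apply inj
      rw [hf, hf, Equiv.apply_symm_apply]
      refine Prod.ext ?_ ?_
      · exact rfl
      · show (φ.toEquiv a).2 + r' = r' + (φ.toEquiv a).2
        rw [hr1, hr2]
    · apply inj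
      rw [hm, hf, Equiv.apply_symm_apply]
      refine Prod.ext ?_ ?_
      · show (φ.toEquiv a).1 * ((φ.toEquiv a).1 + (φ.toEquiv a).1)
            = (φ.toEquiv a).1 + (φ.toEquiv a).1
        rw [hB1, hB2]
      · show (φ.toEquiv a).2 * ((φ.toEquiv a).2 + r') = (φ.toEquiv a).2 + r'
        rw [hr1, mul_zero' hz hinv]
  · -- J universal
    have key : ∀ a b : S, ∃ x y, a = x + b + y := by
      intro a b
      obtain ⟨s', hs1, hs2⟩ := hinv (φ.toEquiv b).2
      refine ⟨φ.toEquiv.symm ((φ.toEquiv a).1, (φ.toEquiv a).2 + s'),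
        φ.toEquiv.symm ((φ.toEquiv a).1, z), ?_⟩
      apply inj
      rw [hf, hf, Equiv.apply_symm_apply, Equiv.apply_symm_apply]
      refine Prod.ext ?_ ?_
      · show (φ.toEquiv a).1 = ((φ.toEquiv a).1 + (φ.toEquiv b).1) + (φ.toEquiv a).1
        exact hB3 _ _
      · show (φ.toEquiv a).2 = (((φ.toEquiv a).2 + s') + (φ.toEquiv b).2) + z
        rw [(hz (((φ.toEquiv a).2 + s') + (φ.toEquiv b).2)).1, aA, hs2,
            (hz (φ.toEquiv a).2).1]
    intro a b
    obtain ⟨x, y, hxy⟩ := key a b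
    obtain ⟨x', y', hxy'⟩ := key b a
    exact ⟨Or.inr (Or.inr (Or.inr ⟨x, y, hxy⟩)),
      Or.inr (Or.inr (Or.inr ⟨x', y', hxy'⟩))⟩
  · -- idempotents closed
    intro e f he hf'
    have hez : (φ.toEquiv e).2 = z := by
      refine idem_eq_zero hz hinv ?_
      have h2 := hf e e
      rw [he] at h2
      exact (congrArg Prod.snd h2).symm
    have hfz : (φ.toEquiv f).2 = z := by
      refine idem_eq_zero hz hinv ?_
      have h2 := hf f f
      rw [hf'] at h2
      exact (congrArg Prod.snd h2).symm
    show (e + f) + (e + f) = e + f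
    apply inj
    rw [hf, hf]
    refine Prod.ext ?_ ?_
    · exact hB1 _
    · show ((φ.toEquiv e).2 + (φ.toEquiv f).2) + ((φ.toEquiv e).2 + (φ.toEquiv f).2)
          = (φ.toEquiv e).2 + (φ.toEquiv f).2
      rw [hez, hfz, (hz z).1, (hz z).1]

end S5

/-- a semiring is a rectangular skew-ring iff it is isomorphic to the
direct product of a rectangular band semiring and a skew-ring. -/
theorem stmt5 (S : Type u) [PSemiring S] :
    IsRectSkewRing S ↔
      ∃ (B R : Type u) (_ : PSemiring B) (_ : PSemiring R),
        IsRectBandSemiring B ∧ IsSkewRing R ∧ Nonempty (PIso S (B × R)) := by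
  constructor
  · intro hyp
    have h : S5.H S := ⟨hyp.1, hyp.2.1, hyp.2.2⟩
    obtain hS | hS := isEmpty_or_nonempty S
    · exact S5.empty_case hS
    · obtain ⟨a0⟩ := hS
      exact S5.fwd h a0
  · rintro ⟨B, R, iB, iR, hB, hR, ⟨φ⟩⟩
    exact S5.reverse iB iR hB hR φ
end

section
/- A semiring S is a nil-extension of a rectangular skew-ring if and only if S is a completely Archimedean semiring and the set E⁺(S) of additive idempotents is a subsemigroup of (S,+). -/
universe u

section Stmt8Aux

variable {S : Type u} [PSemiring S]

private instance : AddSemigroup S := { toAdd := inferInstance, add_assoc := PSemiring.add_assoc }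

private theorem mulL (a b c : S) : a * (b + c) = a * b + a * c := PSemiring.left_distrib a b c
private theorem mulR (a b c : S) : (a + b) * c = a * c + b * c := PSemiring.right_distrib a b c

private theorem nmul_succ (n : ℕ) (a : S) : nmul (n+1) a = nmul n a + a := rfl

private theorem nmul_comm_one (n : ℕ) (a : S) : nmul n a + a = a + nmul n a := by
  induction n with
  | zero => rfl
  | succ n ih =>
      show (nmul n a + a) + a = a + (nmul n a + a)
      rw [ih, add_assoc, ih]

private theorem nmul_head (n : ℕ) (a : S) : nmul (n+1) a = a + nmul n a := by
  rw [nmul_succ, nmul_comm_one]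

private theorem nmul_idem {e : S} (he : AddIdem e) : ∀ n, nmul n e = e
  | 0 => rfl
  | n+1 => by rw [nmul_succ, nmul_idem he n, he]

private theorem idem_reg {e : S} (he : AddIdem e) : AddRegular e :=
  ⟨e, by rw [he, he]⟩

private theorem idem_pow_left {h b : S} (h1 : h + b = b) : ∀ n, h + nmul n b = nmul n b
  | 0 => h1
  | n+1 => by rw [nmul_succ, ← add_assoc, idem_pow_left h1 n]

private theorem idem_pow_right {h b : S} (h2 : b + h = b) : ∀ n, nmul n b + h = nmul n b
  | 0 => h2
  | n+1 => by rw [nmul_succ, add_assoc, h2]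

private theorem iter_eq {s u w : S} (h : s = u + s + w) : ∀ k, s = nmul k u + s + nmul k w
  | 0 => h
  | k+1 => by
      have ih := iter_eq h k
      have h2 : s = u + (nmul k u + s + nmul k w) + w := by rw [← ih]; exact h
      rw [nmul_head, nmul_succ]
      simp only [add_assoc] at h2 ⊢
      exact h2

private theorem power_group (HQ : ∀ a : S, ∃ n, AddCompletelyRegular (nmul n a)) (u : S) :
    ∃ k f x, AddIdem f ∧ nmul k u + x = f ∧ x + nmul k u = f ∧
      f + nmul k u = nmul k u ∧ nmul k u + f = nmul k u := by
  obtain ⟨n, x, h1, h2, _⟩ := HQ u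
  have hfc : (nmul n u + x) + nmul n u = nmul n u := h1.symm
  have hcf : nmul n u + (nmul n u + x) = nmul n u := by
    rw [h2, ← add_assoc]; exact h1.symm
  have hidem : AddIdem (nmul n u + x) := by
    show (nmul n u + x) + (nmul n u + x) = nmul n u + x
    have e1 : (nmul n u + x) + (nmul n u + x) = ((nmul n u + x) + nmul n u) + x := by
      simp only [add_assoc]
    rw [e1, hfc]
  exact ⟨n, nmul n u + x, x, hidem, rfl, h2.symm, hfc, hcf⟩

private theorem absorb_right (HQ : ∀ a : S, ∃ n, AddCompletelyRegular (nmul n a))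
    {s u w : S} (h : s = u + s + w) : ∃ v, s = (s + w) + v := by
  obtain ⟨k, f, x, hf, hcx, hxc, hfc, hcf⟩ := power_group HQ w
  have hit : s = nmul k u + s + nmul k w := iter_eq h k
  have h5 : s + f = s := by
    conv_lhs => rw [hit]
    rw [add_assoc, hcf, ← hit]
  have h6 : s = (s + nmul k w) + x := by
    conv_lhs => rw [← h5, ← hcx]
    simp only [add_assoc]
  cases k with
  | zero => exact ⟨x, h6⟩
  | succ k =>
      refine ⟨nmul k w + x, ?_⟩
      rw [nmul_head] at h6
      simp only [add_assoc] at h6 ⊢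
      exact h6

private theorem absorb_left (HQ : ∀ a : S, ∃ n, AddCompletelyRegular (nmul n a))
    {s u w : S} (h : s = u + s + w) : ∃ v, s = v + (u + s) := by
  obtain ⟨k, f, x, hf, hcx, hxc, hfc, hcf⟩ := power_group HQ u
  have hit : s = nmul k u + s + nmul k w := iter_eq h k
  have h5 : f + s = s := by
    conv_lhs => rw [hit]
    rw [← add_assoc, ← add_assoc, hfc, ← hit]
  have h6 : s = x + (nmul k u + s) := by
    conv_lhs => rw [← h5, ← hxc]
    simp only [add_assoc]
  cases k with
  | zero => exact ⟨x, h6⟩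
  | succ k =>
      refine ⟨x + nmul k u, ?_⟩
      rw [nmul_succ] at h6
      simp only [add_assoc] at h6 ⊢
      exact h6

private theorem lemR (HQ : ∀ a : S, ∃ n, AddCompletelyRegular (nmul n a)) {s t : S}
    (h : s = s + t ∨ (∃ y, s = (s + t) + y) ∨ (∃ x, s = x + (s + t)) ∨
      ∃ x y, s = (x + (s + t)) + y) :
    ∃ r, s = (s + t) + r := by
  rcases h with h | ⟨y, h⟩ | ⟨x, h⟩ | ⟨x, y, h⟩
  · refine ⟨t, ?_⟩
    conv_rhs => rw [← h]
    exact h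
  · exact ⟨y, h⟩
  · have h' : s = (x + s) + t := by rw [add_assoc]; exact h
    exact absorb_right HQ h'
  · have h' : s = (x + s) + (t + y) := by
      simp only [add_assoc] at h ⊢
      exact h
    obtain ⟨v, hv⟩ := absorb_right HQ h'
    refine ⟨y + v, ?_⟩
    simp only [add_assoc] at hv ⊢
    exact hv

private theorem lemL (HQ : ∀ a : S, ∃ n, AddCompletelyRegular (nmul n a)) {s t : S}
    (h : s = t + s ∨ (∃ x, s = x + (t + s)) ∨ (∃ y, s = (t + s) + y) ∨
      ∃ x y, s = (x + (t + s)) + y) :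
    ∃ l, s = l + (t + s) := by
  rcases h with h | ⟨x, h⟩ | ⟨y, h⟩ | ⟨x, y, h⟩
  · refine ⟨t, ?_⟩
    conv_rhs => rw [← h]
    exact h
  · exact ⟨x, h⟩
  · exact absorb_left HQ (show s = (t + s) + y from h)
  · have h' : s = ((x + t) + s) + y := by
      simp only [add_assoc] at h ⊢
      exact h
    obtain ⟨v, hv⟩ := absorb_left HQ h'
    refine ⟨v + x, ?_⟩
    simp only [add_assoc] at hv ⊢
    exact hv

private theorem regular_of_R {s c r d : S} (hc : AddRegular c) (h1 : s = c + r) (h2 : c = s + d) :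
    AddRegular s := by
  obtain ⟨z, hz⟩ := hc
  refine ⟨d + z, ?_⟩
  calc s = c + r := h1
    _ = ((c + z) + c) + r := by rw [← hz]
    _ = (c + z) + s := by rw [add_assoc, ← h1]
    _ = ((s + d) + z) + s := by rw [← h2]
    _ = (s + (d + z)) + s := by simp only [add_assoc]

private theorem regular_of_L {s c l d : S} (hc : AddRegular c) (h1 : s = l + c) (h2 : c = d + s) :
    AddRegular s := by
  obtain ⟨z, hz⟩ := hc
  refine ⟨z + d, ?_⟩
  calc s = l + c := h1
    _ = l + ((c + z) + c) := by rw [← hz]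
    _ = ((l + c) + z) + c := by simp only [add_assoc]
    _ = (s + z) + c := by rw [← h1]
    _ = (s + z) + (d + s) := by rw [← h2]
    _ = (s + (z + d)) + s := by simp only [add_assoc]

private theorem exists_regIndex {a : S} (h : ∃ n, AddRegular (nmul n a)) : ∃ m, regIndex a m := by
  classical
  exact ⟨Nat.find h, Nat.find_spec h, fun k hk => Nat.find_min h hk⟩

private theorem regIndex_zero {a : S} {m : ℕ} (h : regIndex a m) (ha : AddRegular a) : m = 0 := by
  by_contra h0
  exact h.2 0 (Nat.pos_of_ne_zero h0) ha

private theorem addJ_reg_any (HJ : ∀ a b : S, addJstar a b) {r : S} (hr : AddRegular r) (s : S) :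
    ∃ n, regIndex s n ∧ addJ r (nmul n s) := by
  obtain ⟨m, n, hm, hn, hJ⟩ := HJ r s
  have h0 : m = 0 := regIndex_zero hm hr
  subst h0
  exact ⟨n, hn, hJ⟩



private theorem star_left (HQ : ∀ a : S, ∃ n, AddCompletelyRegular (nmul n a))
    (HJ : ∀ a b : S, addJstar a b) {f s : S} (hf : AddIdem f) (hfs : f + s = s) :
    AddRegular s := by
  obtain ⟨n, hn, hJ⟩ := addJ_reg_any HJ (idem_reg hf) s
  cases n with
  | zero => exact hn.1
  | succ m =>
      have key : ∃ r, s = (s + nmul m s) + r := by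
        apply lemR HQ
        rcases hJ.1 with h | ⟨u, h⟩ | ⟨v, h⟩ | ⟨u, v, h⟩
        · right; left
          refine ⟨s, ?_⟩
          have hfs' := hfs
          rw [h, nmul_head m s] at hfs'
          exact hfs'.symm
        · right; right; right
          refine ⟨u, s, ?_⟩
          have hfs' := hfs
          rw [h, nmul_head m s] at hfs'
          simp only [add_assoc] at hfs' ⊢
          exact hfs'.symm
        · right; left
          refine ⟨v + s, ?_⟩
          have hfs' := hfs
          rw [h, nmul_head m s] at hfs'
          simp only [add_assoc] at hfs' ⊢
          exact hfs'.symm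
        · right; right; right
          refine ⟨u, v + s, ?_⟩
          have hfs' := hfs
          rw [h, nmul_head m s] at hfs'
          simp only [add_assoc] at hfs' ⊢
          exact hfs'.symm
      obtain ⟨r, hr⟩ := key
      exact regular_of_R hn.1 (by rw [nmul_head m s]; exact hr) (nmul_head m s)

private theorem star_right (HQ : ∀ a : S, ∃ n, AddCompletelyRegular (nmul n a))
    (HJ : ∀ a b : S, addJstar a b) {f s : S} (hf : AddIdem f) (hsf : s + f = s) :
    AddRegular s := by
  obtain ⟨n, hn, hJ⟩ := addJ_reg_any HJ (idem_reg hf) s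
  cases n with
  | zero => exact hn.1
  | succ m =>
      have key : ∃ l, s = l + (nmul m s + s) := by
        apply lemL HQ
        rcases hJ.1 with h | ⟨u, h⟩ | ⟨v, h⟩ | ⟨u, v, h⟩
        · right; left
          refine ⟨s, ?_⟩
          have hsf' := hsf
          rw [h, nmul_succ m s] at hsf'
          exact hsf'.symm
        · right; left
          refine ⟨s + u, ?_⟩
          have hsf' := hsf
          rw [h, nmul_succ m s] at hsf'
          simp only [add_assoc] at hsf' ⊢
          exact hsf'.symm
        · right; right; right
          refine ⟨s, v, ?_⟩
          have hsf' := hsf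
          rw [h, nmul_succ m s] at hsf'
          simp only [add_assoc] at hsf' ⊢
          exact hsf'.symm
        · right; right; right
          refine ⟨s + u, v, ?_⟩
          have hsf' := hsf
          rw [h, nmul_succ m s] at hsf'
          simp only [add_assoc] at hsf' ⊢
          exact hsf'.symm
      obtain ⟨l, hl⟩ := key
      exact regular_of_L hn.1 (by rw [nmul_succ m s]; exact hl) (nmul_succ m s)

private theorem rect (HQ : ∀ a : S, ∃ n, AddCompletelyRegular (nmul n a))
    (HJ : ∀ a b : S, addJstar a b)
    (HE : ∀ e f : S, AddIdem e → AddIdem f → AddIdem (e + f))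
    {e f : S} (he : AddIdem e) (hf : AddIdem f) : (e + f) + e = e := by
  set h := (e + f) + e with hdef
  have hh : AddIdem h := HE (e + f) e (HE e f he hf) he
  obtain ⟨nidx, hn, hJ⟩ := addJ_reg_any HJ (idem_reg he) h
  have h0 : nidx = 0 := regIndex_zero hn (idem_reg hh)
  subst h0
  have hJ' : addLeJ e h := hJ.1
  have hhe : h = e + (f + e) := by rw [hdef, add_assoc]
  have key : ∃ r, e = (e + (f + e)) + r := by
    apply lemR HQ
    rcases hJ' with h1 | ⟨u, h1⟩ | ⟨v, h1⟩ | ⟨u, v, h1⟩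
    · left; rw [← hhe]; exact h1
    · right; right; left
      exact ⟨u, by rw [← hhe]; exact h1⟩
    · right; left
      exact ⟨v, by rw [← hhe]; exact h1⟩
    · right; right; right
      exact ⟨u, v, by rw [← hhe]; exact h1⟩
  obtain ⟨r, hr⟩ := key
  have hr' : e = h + r := by rw [hhe]; exact hr
  have hhe2 : h + e = h := by
    rw [hdef]
    simp only [add_assoc]
    rw [he]
  have h3 : h + e = e := by
    conv_lhs => rw [hr', ← add_assoc, hh]
    exact hr'.symm
  rw [← hhe2]
  exact h3

private theorem grp (HQ : ∀ a : S, ∃ n, AddCompletelyRegular (nmul n a))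
    (HJ : ∀ a b : S, addJstar a b) {h b : S} (hh : AddIdem h)
    (h1 : h + b = b) (h2 : b + h = b) :
    ∃ x, b + x = h ∧ x + b = h ∧ h + x = x ∧ x + h = x := by
  obtain ⟨n, hn, hJ⟩ := addJ_reg_any HJ (idem_reg hh) b
  have hA : ∃ r, h = (h + b) + r := by
    apply lemR HQ
    cases n with
    | zero =>
        have hJ0 : addLeJ h b := hJ.1
        rcases hJ0 with h3 | ⟨u, h3⟩ | ⟨v, h3⟩ | ⟨u, v, h3⟩
        · left; rw [h1]; exact h3
        · right; right; left
          exact ⟨u, by rw [h1]; exact h3⟩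
        · right; left
          exact ⟨v, by rw [h1]; exact h3⟩
        · right; right; right
          exact ⟨u, v, by rw [h1]; exact h3⟩
    | succ k =>
        have hcS : nmul (k+1) b = (h + b) + nmul k b := by
          calc nmul (k+1) b = b + nmul k b := nmul_head k b
            _ = (h + b) + nmul k b := by rw [h1]
        rcases hJ.1 with h3 | ⟨u, h3⟩ | ⟨v, h3⟩ | ⟨u, v, h3⟩
        · rw [hcS] at h3
          right; left; exact ⟨nmul k b, h3⟩
        · rw [hcS] at h3
          right; right; right
          refine ⟨u, nmul k b, ?_⟩
          simp only [add_assoc] at h3 ⊢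
          exact h3
        · rw [hcS] at h3
          right; left
          refine ⟨nmul k b + v, ?_⟩
          simp only [add_assoc] at h3 ⊢
          exact h3
        · rw [hcS] at h3
          right; right; right
          refine ⟨u, nmul k b + v, ?_⟩
          simp only [add_assoc] at h3 ⊢
          exact h3
  have hB : ∃ l, h = l + (b + h) := by
    apply lemL HQ
    cases n with
    | zero =>
        have hJ0 : addLeJ h b := hJ.1
        rcases hJ0 with h3 | ⟨u, h3⟩ | ⟨v, h3⟩ | ⟨u, v, h3⟩
        · left; rw [h2]; exact h3
        · right; left
          exact ⟨u, by rw [h2]; exact h3⟩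
        · right; right; left
          exact ⟨v, by rw [h2]; exact h3⟩
        · right; right; right
          exact ⟨u, v, by rw [h2]; exact h3⟩
    | succ k =>
        have hcS : nmul (k+1) b = nmul k b + (b + h) := by
          calc nmul (k+1) b = nmul k b + b := rfl
            _ = nmul k b + (b + h) := by rw [h2]
        rcases hJ.1 with h3 | ⟨u, h3⟩ | ⟨v, h3⟩ | ⟨u, v, h3⟩
        · rw [hcS] at h3
          right; left; exact ⟨nmul k b, h3⟩
        · rw [hcS] at h3
          right; left
          refine ⟨u + nmul k b, ?_⟩
          simp only [add_assoc] at h3 ⊢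
          exact h3
        · rw [hcS] at h3
          right; right; right
          exact ⟨nmul k b, v, h3⟩
        · rw [hcS] at h3
          right; right; right
          refine ⟨u + nmul k b, v, ?_⟩
          simp only [add_assoc] at h3 ⊢
          exact h3
  obtain ⟨r, hr⟩ := hA
  obtain ⟨l, hl⟩ := hB
  rw [h1] at hr
  rw [h2] at hl
  have hbx : b + ((h + r) + h) = h := by
    have e1 : b + ((h + r) + h) = ((b + h) + r) + h := by simp only [add_assoc]
    rw [e1, h2, ← hr, hh]
  have hlb : ((h + l) + h) + b = h := by
    have e1 : ((h + l) + h) + b = (h + l) + (h + b) := by simp only [add_assoc]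
    rw [e1, h1, add_assoc, ← hl, hh]
  have hhx : h + ((h + r) + h) = (h + r) + h := by
    have e1 : h + ((h + r) + h) = ((h + h) + r) + h := by simp only [add_assoc]
    rw [e1, hh]
  have hxh : ((h + r) + h) + h = (h + r) + h := by
    rw [add_assoc, hh]
  have hhl : h + ((h + l) + h) = (h + l) + h := by
    have e1 : h + ((h + l) + h) = ((h + h) + l) + h := by simp only [add_assoc]
    rw [e1, hh]
  have hlh : ((h + l) + h) + h = (h + l) + h := by
    rw [add_assoc, hh]
  have hkey : (h + l) + h = (h + r) + h := by
    calc (h + l) + h = ((h + l) + h) + h := hlh.symm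
      _ = ((h + l) + h) + (b + ((h + r) + h)) := by rw [hbx]
      _ = (((h + l) + h) + b) + ((h + r) + h) := by simp only [add_assoc]
      _ = h + ((h + r) + h) := by rw [hlb]
      _ = (h + r) + h := hhx
  refine ⟨(h + r) + h, hbx, ?_, hhx, hxh⟩
  rw [← hkey]
  exact hlb

private theorem canon (HQ : ∀ a : S, ∃ n, AddCompletelyRegular (nmul n a))
    (HJ : ∀ a b : S, addJstar a b)
    (HE : ∀ e f : S, AddIdem e → AddIdem f → AddIdem (e + f))
    {a : S} (ha : AddRegular a) :
    ∃ h, AddIdem h ∧ h + a = a ∧ a + h = a := by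
  obtain ⟨x, hx⟩ := ha
  have he : AddIdem (a + x) := by
    show (a + x) + (a + x) = a + x
    have e1 : (a + x) + (a + x) = ((a + x) + a) + x := by simp only [add_assoc]
    rw [e1, ← hx]
  have hf : AddIdem (x + a) := by
    show (x + a) + (x + a) = x + a
    have e1 : (x + a) + (x + a) = x + ((a + x) + a) := by simp only [add_assoc]
    rw [e1, ← hx]
  have hea : (a + x) + a = a := hx.symm
  have haf : a + (x + a) = a := by rw [← add_assoc]; exact hx.symm
  refine ⟨(a + x) + (x + a), HE _ _ he hf, ?_, ?_⟩
  · calc ((a + x) + (x + a)) + a = ((a + x) + (x + a)) + ((a + x) + a) := by rw [hea]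
      _ = (((a + x) + (x + a)) + (a + x)) + a := by simp only [add_assoc]
      _ = (a + x) + a := by rw [rect HQ HJ HE he hf]
      _ = a := hea
  · calc a + ((a + x) + (x + a)) = (a + (x + a)) + ((a + x) + (x + a)) := by rw [haf]
      _ = a + (((x + a) + (a + x)) + (x + a)) := by simp only [add_assoc]
      _ = a + (x + a) := by rw [rect HQ HJ HE hf he]
      _ = a := haf

private theorem pmul_pow (a y : S) : ∀ n, (nmul n a) * y = nmul n (a * y)
  | 0 => rfl
  | n+1 => by
      show (nmul n a + a) * y = nmul n (a * y) + a * y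
      rw [mulR, pmul_pow a y n]

private theorem mul_idem_eq (HQ : ∀ a : S, ∃ n, AddCompletelyRegular (nmul n a))
    (HJ : ∀ a b : S, addJstar a b)
    (HE : ∀ e f : S, AddIdem e → AddIdem f → AddIdem (e + f))
    {a h : S} (hh : AddIdem h) (h1 : h + a = a) (h2 : a + h = a) :
    a * h = h := by
  obtain ⟨n, x, hc1, hc2, hc3⟩ := HQ a
  have hg : AddIdem (nmul n a + x) := by
    show (nmul n a + x) + (nmul n a + x) = nmul n a + x
    have e1 : (nmul n a + x) + (nmul n a + x) = ((nmul n a + x) + nmul n a) + x := by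
      simp only [add_assoc]
    rw [e1, ← hc1]
  have habs1 : h + nmul n a = nmul n a := idem_pow_left h1 n
  have habs2 : nmul n a + h = nmul n a := idem_pow_right h2 n
  have hhg : h + (nmul n a + x) = nmul n a + x := by rw [← add_assoc, habs1]
  have hgh : (nmul n a + x) + h = nmul n a + x := by rw [hc2, add_assoc, habs2]
  have hgeq : nmul n a + x = h := by
    have hr : (h + (nmul n a + x)) + h = h := rect HQ HJ HE hh hg
    rw [hhg, hgh] at hr
    exact hr
  have hch : nmul n a * h = h := by rw [← hgeq]; exact hc3
  have hp : AddIdem (a * h) := by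
    show a * h + a * h = a * h
    rw [← mulL, hh]
  have hq : nmul n (a * h) = a * h := nmul_idem hp n
  have hfin : nmul n a * h = a * h := by rw [pmul_pow a h n, hq]
  rw [← hfin]
  exact hch

private theorem weakenJ {K : Set S} {a b : S} (h : addLeJIn K a b) : addLeJ a b := by
  rcases h with h | ⟨x, -, h⟩ | ⟨x, -, h⟩ | ⟨x, -, y, -, h⟩
  exacts [Or.inl h, Or.inr (Or.inl ⟨x, h⟩), Or.inr (Or.inr (Or.inl ⟨x, h⟩)),
    Or.inr (Or.inr (Or.inr ⟨x, y, h⟩))]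

private theorem dirJ (HQ : ∀ a : S, ∃ n, AddCompletelyRegular (nmul n a))
    (HJ : ∀ a b : S, addJstar a b)
    (HE : ∀ e f : S, AddIdem e → AddIdem f → AddIdem (e + f))
    (HS : ∀ u : S, AddRegular u → ∀ v, AddRegular (u + v))
    {a b h k : S} (hh : AddIdem h) (hk : AddIdem k)
    (hha : h + a = a) (hkb : k + b = b) (hbk : b + k = b) :
    addLeJIn {c : S | AddRegular c} a b := by
  obtain ⟨b', hbb', hb'b, hkb', hb'k⟩ := grp HQ HJ hk hkb hbk
  right; right; right
  refine ⟨h, idem_reg hh, b' + (h + a), ?_, ?_⟩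
  · have hrb' : AddRegular b' := ⟨b, by rw [hb'b, hkb']⟩
    exact HS b' hrb' (h + a)
  · have e1 : (h + b) + (b' + (h + a)) = ((h + (b + b')) + h) + a := by
      simp only [add_assoc]
    rw [e1, hbb', rect HQ HJ HE hh hk, hha]

end Stmt8Aux

/-- `S` is a nil-extension of a rectangular skew-ring iff `S` is a
completely Archimedean semiring and `E⁺(S)` is a subsemigroup of `(S,+)`. -/
theorem stmt8 (S : Type u) [PSemiring S] :
    (∃ K : Set S, NilExtOn Set.univ K ∧ RectSkewRingOn K) ↔
      ((∀ a : S, ∃ n : ℕ, AddCompletelyRegular (nmul n a)) ∧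
        (∀ a b : S, addJstar a b)) ∧
      ∀ e f : S, AddIdem e → AddIdem f → AddIdem (e + f) := by
  constructor
  · rintro ⟨K, ⟨⟨hKsub, hbi⟩, hnil⟩, ⟨⟨hcl, hcr, hJK⟩, hEK⟩⟩
    have memK : ∀ r : S, AddRegular r → r ∈ K := by
      intro r hr
      obtain ⟨x, hx⟩ := hr
      have he : AddIdem (r + x) := by
        show (r + x) + (r + x) = r + x
        have e1 : (r + x) + (r + x) = ((r + x) + r) + x := by simp only [add_assoc]
        rw [e1, ← hx]
      obtain ⟨n, hne⟩ := hnil (r + x) (Set.mem_univ _)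
      rw [nmul_idem he n] at hne
      have h2 := (hbi (r + x) hne r (Set.mem_univ _)).1
      have h3 : (r + x) + r = r := hx.symm
      rwa [h3] at h2
    have HQ : ∀ a : S, ∃ n, AddCompletelyRegular (nmul n a) := by
      intro a
      obtain ⟨n, hn⟩ := hnil a (Set.mem_univ _)
      obtain ⟨x, -, hx⟩ := hcr _ hn
      exact ⟨n, x, hx⟩
    refine ⟨⟨HQ, ?_⟩, ?_⟩
    · intro a b
      obtain ⟨m, hm⟩ := exists_regIndex (a := a)
        (by obtain ⟨n, x, h1, -, -⟩ := HQ a; exact ⟨n, x, h1⟩)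
      obtain ⟨n, hn⟩ := exists_regIndex (a := b)
        (by obtain ⟨n, x, h1, -, -⟩ := HQ b; exact ⟨n, x, h1⟩)
      refine ⟨m, n, hm, hn, ?_, ?_⟩
      · exact weakenJ (hJK _ (memK _ hm.1) _ (memK _ hn.1)).1
      · exact weakenJ (hJK _ (memK _ hm.1) _ (memK _ hn.1)).2
    · intro e f he hf
      exact hEK e (memK e (idem_reg he)) f (memK f (idem_reg hf)) he hf
  · rintro ⟨⟨HQ, HJ⟩, HE⟩
    have hsum : ∀ u : S, AddRegular u → ∀ v, AddRegular (u + v) := by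
      intro u hu v
      obtain ⟨h, hh, hhu, huh⟩ := canon HQ HJ HE hu
      exact star_left HQ HJ hh (by rw [← add_assoc, hhu])
    have hsum' : ∀ u : S, AddRegular u → ∀ v, AddRegular (v + u) := by
      intro u hu v
      obtain ⟨h, hh, hhu, huh⟩ := canon HQ HJ HE hu
      exact star_right HQ HJ hh (by rw [add_assoc, huh])
    have hmulr : ∀ u : S, AddRegular u → ∀ v, AddRegular (u * v) := by
      intro u hu v
      obtain ⟨y, hy⟩ := hu
      refine ⟨y * v, ?_⟩
      calc u * v = ((u + y) + u) * v := by rw [← hy]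
        _ = (u + y) * v + u * v := mulR _ _ _
        _ = (u * v + y * v) + u * v := by rw [mulR]
    have hmull : ∀ u : S, AddRegular u → ∀ v, AddRegular (v * u) := by
      intro u hu v
      obtain ⟨y, hy⟩ := hu
      refine ⟨v * y, ?_⟩
      calc v * u = v * ((u + y) + u) := by rw [← hy]
        _ = v * (u + y) + v * u := mulL _ _ _
        _ = (v * u + v * y) + v * u := by rw [mulL]
    refine ⟨{c : S | AddRegular c}, ⟨⟨fun _ _ => trivial, ?_⟩, ?_⟩, ⟨⟨?_, ?_, ?_⟩, ?_⟩⟩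
    · intro a ha x _
      exact ⟨hsum a ha x, hsum' a ha x, hmulr a ha x, hmull a ha x⟩
    · intro a _
      obtain ⟨n, x, h1, -, -⟩ := HQ a
      exact ⟨n, x, h1⟩
    · intro a ha b hb
      exact ⟨hsum a ha b, hmulr a ha b⟩
    · intro a ha
      obtain ⟨h, hh, hha, hah⟩ := canon HQ HJ HE ha
      obtain ⟨x', hbx, hxb, hhx, hxh⟩ := grp HQ HJ hh hha hah
      have hx'reg : AddRegular x' := ⟨a, by rw [hxb, hhx]⟩
      refine ⟨x', hx'reg, ?_, ?_, ?_⟩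
      · rw [hbx, hha]
      · rw [hbx, hxb]
      · rw [hbx]
        exact mul_idem_eq HQ HJ HE hh hha hah
    · intro a ha b hb
      obtain ⟨h, hh, hha, hah⟩ := canon HQ HJ HE ha
      obtain ⟨k, hk, hkb, hbk⟩ := canon HQ HJ HE hb
      exact ⟨dirJ HQ HJ HE hsum hh hk hha hkb hbk,
             dirJ HQ HJ HE hsum hk hh hkb hha hah⟩
    · intro e _ f _ he hf
      exact HE e f he hf
end

section
/- Let S be a semiring which is additively quasi regular such that b² H*⁺ b for all b, a = a+x+a implies a = a+2x+2a, and Reg⁺S (the set of additively regular elements) is a subsemigroup of (S,+). Then E⁺(S) is a subsemigroup of (S,+): for all additive idempotents e, f, e+f is an additive idempotent. -/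
universe u

theorem stmt10 (S : Type u) [PSemiring S]
    (hq : ∀ a : S, ∃ n : ℕ, AddRegular (nmul n a))
    (hH : ∀ b : S, addHstar (b * b) b)
    (himp : ∀ a x : S, a = a + x + a → a = a + (x + x) + (a + a))
    (hreg : ∀ a b : S, AddRegular a → AddRegular b → AddRegular (a + b)) :
    ∀ e f : S, AddIdem e → AddIdem f → AddIdem (e + f) := by
  intro e f he hf
  letI : AddSemigroup S := { add_assoc := PSemiring.add_assoc }
  obtain ⟨x, hx⟩ := hreg e f ⟨e, by rw [he, he]⟩ ⟨f, by rw [hf, hf]⟩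
  set s := e + f with hs
  -- hx : s = s + x + s
  have hx0 : s + (x + s) = s := by rw [← add_assoc, ← hx]
  have hx2 : ∀ z : S, s + (x + (s + z)) = s + z := fun z => by
    rw [← add_assoc, ← add_assoc, ← hx]
  set y := x + s + x with hy
  have hyyL : y + s + y = y := by
    rw [hy]; simp only [add_assoc]; rw [hx2, hx2]
  have hyyz : ∀ z : S, y + (s + (y + z)) = y + z := fun z => by
    rw [← add_assoc, ← add_assoc, hyyL]
  have hsy : s + (y + s) = s := by
    rw [hy]; simp only [add_assoc]; rw [hx0, hx0]
  have hes2 : e + s = s := by rw [hs, ← add_assoc, he]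
  have hsf : s + f = s := by rw [hs, add_assoc, hf]
  have hsf' : ∀ z : S, s + (f + z) = s + z := fun z => by rw [← add_assoc, hsf]
  have hes : ∀ z : S, e + (f + z) = s + z := fun z => by rw [← add_assoc, ← hs]
  set t := f + y + e with tdef
  have ht : t + t = t := by
    rw [tdef]; simp only [add_assoc]; rw [hes, hyyz]
  have hst : s + t + s = s := by
    rw [tdef]; simp only [add_assoc]; rw [hsf', hes2, hsy]
  have h := himp s t hst.symm
  rw [ht] at h
  have h2 : s + t + (s + s) = s + s := by rw [← add_assoc, hst]
  rw [h2] at h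
  exact h.symm
end

section
/- Let e, f be additive idempotents of a semiring S, and suppose e+f has an additive inverse x (meaning e+f = (e+f)+x+(e+f) and x = x+(e+f)+x). Then f+x+e is an additive idempotent. -/
universe u

theorem stmt11 (S : Type u) [PSemiring S] (e f x : S)
    (he : AddIdem e) (hf : AddIdem f)
    (h1 : e + f = (e + f) + x + (e + f)) (h2 : x = x + (e + f) + x) :
    AddIdem (f + x + e) := by
  have aa := PSemiring.add_assoc (S := S)
  show (f + x + e) + (f + x + e) = f + x + e
  have key : (f + x + e) + (f + x + e) = f + (x + (e + f) + x) + e := by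
    simp only [aa]
  rw [key, ← h2]
end

section
/- Let S be a semiring with e, f additive idempotents such that e+f has an additive inverse x, and suppose the implication (a = a+y+a ⟹ a = a+2y+2a) holds in S. Then e+f is an additive idempotent: 2(e+f) = e+f. -/
universe u

theorem stmt12 (S : Type u) [PSemiring S] (e f x : S)
    (he : AddIdem e) (hf : AddIdem f)
    (h1 : e + f = (e + f) + x + (e + f)) (h2 : x = x + (e + f) + x)
    (himp : ∀ a y : S, a = a + y + a → a = a + (y + y) + (a + a)) :
    (e + f) + (e + f) = e + f := by
  have assoc : ∀ a b c : S, (a + b) + c = a + (b + c) := PSemiring.add_assoc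
  set a := e + f with ha
  have haf : a + f = a := by rw [ha, assoc, hf]
  have hea : e + a = a := by rw [ha, ← assoc, he]
  have hy : a + (f + x + e) + a = a := by
    calc a + (f + x + e) + a = ((a + f) + x) + (e + a) := by
          simp only [assoc]
      _ = a + x + a := by rw [haf, hea]
      _ = a := h1.symm
  have hyy : (f + x + e) + (f + x + e) = f + x + e := by
    calc (f + x + e) + (f + x + e) = f + (x + (e + f) + x) + e := by
          simp only [assoc]
      _ = f + x + e := by rw [← h2]
  have := himp a (f + x + e) hy.symm
  rw [hyy] at this
  have : a = a + a := by
    calc a = a + (f + x + e) + (a + a) := this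
      _ = (a + (f + x + e) + a) + a := by simp only [assoc]
      _ = a + a := by rw [hy]
  exact this.symm
end

section
/- Let S be a quasi completely regular semiring such that any two additive idempotents commute additively (e+f = f+e for all e,f ∈ E⁺(S)). Then Reg⁺S, the set of additively regular elements, is a subsemigroup of (S,+). -/
universe u

theorem stmt13 (S : Type u) [PSemiring S]
    (hq : ∀ a : S, ∃ n : ℕ, AddCompletelyRegular (nmul n a))
    (hc : ∀ e f : S, AddIdem e → AddIdem f → e + f = f + e) :
    ∀ a b : S, AddRegular a → AddRegular b → AddRegular (a + b) := by
  letI : AddSemigroup S := ⟨PSemiring.add_assoc⟩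
  rintro a b ⟨x, ha⟩ ⟨y, hb⟩
  have ha1 : a + (x + a) = a := by rw [← add_assoc]; exact ha.symm
  have hb1 : b + (y + b) = b := by rw [← add_assoc]; exact hb.symm
  have ha2 : ∀ c : S, a + (x + (a + c)) = a + c := fun c => by
    rw [← add_assoc, ← add_assoc, ← ha]
  have hb2 : ∀ c : S, b + (y + (b + c)) = b + c := fun c => by
    rw [← add_assoc, ← add_assoc, ← hb]
  set x' : S := x + (a + x) with hx'
  set y' : S := y + (b + y) with hy'
  have hax' : a + (x' + a) = a := by simp only [hx', add_assoc, ha2, ha1]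
  have hby' : b + (y' + b) = b := by simp only [hy', add_assoc, hb2, hb1]
  set e : S := x' + a with he'
  set f : S := b + y' with hf'
  have he : AddIdem e := by
    show e + e = e
    simp only [he', hx', add_assoc, ha2, ha1]
  have hf : AddIdem f := by
    show f + f = f
    simp only [hf', hy', add_assoc, hb2, hb1]
  have hef : e + f = f + e := hc e f he hf
  have heC : ∀ c : S, e + (e + c) = e + c := fun c => by rw [← add_assoc, he]
  have hfC : ∀ c : S, f + (f + c) = f + c := fun c => by rw [← add_assoc, hf]
  have hfold1 : ∀ c : S, b + (y' + c) = f + c := fun c => (add_assoc b y' c).symm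
  have hfold2 : ∀ c : S, x' + (a + c) = e + c := fun c => (add_assoc x' a c).symm
  refine ⟨y' + (f + e) + x', ?_⟩
  have step : a + (f + (e + b)) = a + b := by
    have h1 : f + (e + b) = e + (f + b) := by
      rw [← add_assoc, ← hef, add_assoc]
    have hfb : f + b = b := by rw [hf', add_assoc, hby']
    have hae : a + e = a := by rw [he', hax']
    rw [h1, ← add_assoc, hae, hfb]
  calc a + b = a + (f + (e + b)) := step.symm
    _ = a + b + (y' + (f + e) + x') + (a + b) := by
        simp only [add_assoc, hfold1, hfold2, heC, hfC]
end

section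
/- A semiring S is a left skew-ring if and only if S is a rectangular skew-ring whose additive reduct (S,+) is a left group. -/
universe u

/-- A left skew-ring: isomorphic to a direct product of a left zero semiring and a skew-ring. -/
def IsLeftSkewRing (S : Type u) [PSemiring S] : Prop :=
  ∃ (L G : Type u) (_ : PSemiring L) (_ : PSemiring G),
    IsLeftZeroSemiring L ∧ IsSkewRing G ∧ Nonempty (PIso S (L × G))

/-- The additive reduct of `S` is a left group: isomorphic (additively) to the direct
product of a left zero semigroup and a group. -/
def AddLeftGroup (S : Type u) [Add S] : Prop :=
  ∃ (Z G : Type u) (_ : Add Z) (_ : Add G),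
    (∀ x a : Z, x + a = x) ∧
    (∀ a b c : G, (a + b) + c = a + (b + c)) ∧
    (∃ z : G, (∀ a : G, a + z = a ∧ z + a = a) ∧ ∀ a : G, ∃ b : G, a + b = z ∧ b + a = z) ∧
    ∃ φ : S ≃ Z × G, ∀ a b : S, φ (a + b) = φ a + φ b

section Helpers

variable {G : Type u} [Add G]

lemma grp_cancel (hassoc : ∀ a b c : G, (a + b) + c = a + (b + c)) (z : G)
    (hz : ∀ a : G, a + z = a ∧ z + a = a)
    (hinv : ∀ a : G, ∃ b, a + b = z ∧ b + a = z) :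
    ∀ {a b : G}, a + b = a → b = z := by
  intro a b h
  obtain ⟨c, _, hc2⟩ := hinv a
  calc b = z + b := ((hz b).2).symm
    _ = (c + a) + b := by rw [hc2]
    _ = c + (a + b) := hassoc ..
    _ = c + a := by rw [h]
    _ = z := hc2

lemma grp_cancel_right (hassoc : ∀ a b c : G, (a + b) + c = a + (b + c)) (z : G)
    (hz : ∀ a : G, a + z = a ∧ z + a = a)
    (hinv : ∀ a : G, ∃ b, a + b = z ∧ b + a = z) :
    ∀ {a b : G}, a + b = b → a = z := by
  intro a b h
  obtain ⟨c, hc1, _⟩ := hinv b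
  calc a = a + z := ((hz a).1).symm
    _ = a + (b + c) := by rw [hc1]
    _ = (a + b) + c := (hassoc ..).symm
    _ = b + c := by rw [h]
    _ = z := hc1

end Helpers

theorem stmt19 (S : Type u) [PSemiring S] :
    IsLeftSkewRing S ↔ IsRectSkewRing S ∧ AddLeftGroup S := by
  constructor
  · rintro ⟨L, G, instL, instG, ⟨hLmul, hLadd⟩, hG, ⟨φ⟩⟩
    obtain ⟨z, hz, hinv⟩ := hG
    have cancel : ∀ {a b : G}, a + b = a → b = z :=
      grp_cancel instG.add_assoc z hz hinv
    have hGassoc := instG.add_assoc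
    have mulz : ∀ g : G, g * z = z := by
      intro g
      have h1 : z + z = z := (hz z).1
      have h2 : g * (z + z) = g * z + g * z := instG.left_distrib g z z
      rw [h1] at h2
      exact cancel h2.symm
    choose neg hneg1 hneg2 using hinv
    have φadd : ∀ a b : S, φ.toEquiv (a + b) = φ.toEquiv a + φ.toEquiv b := φ.map_add'
    have φmul : ∀ a b : S, φ.toEquiv (a * b) = φ.toEquiv a * φ.toEquiv b := φ.map_mul'
    have hidem : ∀ e : S, AddIdem e → (φ.toEquiv e).2 = z := by
      intro e he
      have h : φ.toEquiv (e + e) = φ.toEquiv e + φ.toEquiv e := φadd e e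
      rw [he] at h
      have h2 : (φ.toEquiv e).2 + (φ.toEquiv e).2 = (φ.toEquiv e).2 :=
        congrArg Prod.snd h.symm
      exact cancel h2
    refine ⟨⟨?_, ?_, ?_⟩, ?_⟩
    · -- completely regular
      intro a
      set p := φ.toEquiv a with hp
      refine ⟨φ.toEquiv.symm (p.1, neg p.2), ?_, ?_, ?_⟩
      · apply φ.toEquiv.injective
        rw [φadd, φadd, Equiv.apply_symm_apply]
        refine Prod.ext ?_ ?_
        · show p.1 = (p.1 + p.1) + p.1
          rw [hLadd, hLadd]
        · show p.2 = (p.2 + neg p.2) + p.2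
          rw [hneg1, (hz p.2).2]
      · apply φ.toEquiv.injective
        rw [φadd, φadd, Equiv.apply_symm_apply]
        refine Prod.ext ?_ ?_
        · show p.1 + p.1 = p.1 + p.1
          rfl
        · show p.2 + neg p.2 = neg p.2 + p.2
          rw [hneg1, hneg2]
      · apply φ.toEquiv.injective
        rw [φmul, φadd, Equiv.apply_symm_apply]
        refine Prod.ext ?_ ?_
        · show p.1 * (p.1 + p.1) = p.1 + p.1
          rw [hLadd, hLmul]
        · show p.2 * (p.2 + neg p.2) = p.2 + neg p.2
          rw [hneg1, mulz]
    · -- all elements J-related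
      have key : ∀ a b : S, addLeJ a b := by
        intro a b
        set p := φ.toEquiv a with hp
        set q := φ.toEquiv b with hq
        refine Or.inr (Or.inr (Or.inr
          ⟨φ.toEquiv.symm (p.1, p.2 + neg (q.2 + q.2)), b, ?_⟩))
        apply φ.toEquiv.injective
        rw [φadd, φadd, Equiv.apply_symm_apply]
        refine Prod.ext ?_ ?_
        · show p.1 = (p.1 + q.1) + q.1
          rw [hLadd, hLadd]
        · show p.2 = ((p.2 + neg (q.2 + q.2)) + q.2) + q.2
          rw [hGassoc (p.2 + neg (q.2 + q.2)) q.2 q.2,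
            hGassoc p.2 (neg (q.2 + q.2)) (q.2 + q.2),
            hneg2, (hz p.2).1]
      exact fun a b => ⟨key a b, key b a⟩
    · -- idempotents closed under +
      intro e f he hf
      have he2 := hidem e he
      have hf2 := hidem f hf
      show (e + f) + (e + f) = e + f
      apply φ.toEquiv.injective
      rw [φadd, φadd]
      refine Prod.ext ?_ ?_
      · show ((φ.toEquiv e).1 + (φ.toEquiv f).1) + ((φ.toEquiv e).1 + (φ.toEquiv f).1)
          = (φ.toEquiv e).1 + (φ.toEquiv f).1
        rw [hLadd]
      · show ((φ.toEquiv e).2 + (φ.toEquiv f).2) + ((φ.toEquiv e).2 + (φ.toEquiv f).2)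
          = (φ.toEquiv e).2 + (φ.toEquiv f).2
        rw [he2, hf2]
        simp only [(hz z).1]
    · -- additive left group
      exact ⟨L, G, instL.toAdd, instG.toAdd, hLadd, instG.add_assoc,
        ⟨z, hz, fun a => ⟨neg a, hneg1 a, hneg2 a⟩⟩, φ.toEquiv, φ.map_add'⟩
  · rintro ⟨⟨hCR, hJ, hE⟩, Z, G, addZ, addG, hZ, hGassoc, ⟨z, hz, hinv⟩, φ, hφ⟩
    clear hJ hE
    have cancel : ∀ {a b : G}, a + b = a → b = z :=
      grp_cancel hGassoc z hz hinv
    have cancelr : ∀ {a b : G}, a + b = b → a = z :=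
      grp_cancel_right hGassoc z hz hinv
    choose neg hneg1 hneg2 using hinv
    have fst_add : ∀ p q : Z × G, (p + q).1 = p.1 + q.1 := fun _ _ => rfl
    have snd_add : ∀ p q : Z × G, (p + q).2 = p.2 + q.2 := fun _ _ => rfl
    by_cases hS : Nonempty S
    · obtain ⟨a0⟩ := hS
      set z0 : Z := (φ a0).1 with hz0
      -- the additive idempotent with first coordinate `w`
      set e : Z → S := fun w => φ.symm (w, z) with hedef
      have he : ∀ w : Z, φ (e w) = (w, z) := fun w => φ.apply_symm_apply _
      -- the element with first coordinate `z0` and second coordinate `g`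
      set f : G → S := fun g => φ.symm (z0, g) with hfdef
      have hf : ∀ g : G, φ (f g) = (z0, g) := fun g => φ.apply_symm_apply _
      -- products with idempotents are idempotent
      have EmulR : ∀ (a : S) (w : Z), (φ (a * e w)).2 = z := by
        intro a w
        have h1 : e w + e w = e w := by
          apply φ.injective
          rw [hφ, he]
          exact Prod.ext (hZ w w) ((hz z).1)
        have h2 : a * e w = a * e w + a * e w := by
          conv_lhs => rw [← h1, PSemiring.left_distrib]
        have h3 : (φ (a * e w)).2 + (φ (a * e w)).2 = (φ (a * e w)).2 := by
          conv_rhs => rw [h2, hφ]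
          rfl
        exact cancel h3
      have EmulL : ∀ (a : S) (w : Z), (φ (e w * a)).2 = z := by
        intro a w
        have h1 : e w + e w = e w := by
          apply φ.injective
          rw [hφ, he]
          exact Prod.ext (hZ w w) ((hz z).1)
        have h2 : e w * a = e w * a + e w * a := by
          conv_lhs => rw [← h1, PSemiring.right_distrib]
        have h3 : (φ (e w * a)).2 + (φ (e w * a)).2 = (φ (e w * a)).2 := by
          conv_rhs => rw [h2, hφ]
          rfl
        exact cancel h3
      -- the "inverse" element
      set xinv : S → S := fun a => φ.symm ((φ a).1, neg (φ a).2) with hxdef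
      have hx : ∀ a : S, a + xinv a = e (φ a).1 := by
        intro a
        apply φ.injective
        rw [hφ, he, φ.apply_symm_apply]
        exact Prod.ext (hZ _ _) (hneg1 _)
      have hx' : ∀ a : S, e z0 + a = f (φ a).2 := by
        intro a
        apply φ.injective
        rw [hφ, he, hf]
        exact Prod.ext (hZ _ _) ((hz _).2)
      -- the component multiplications
      set mZ : Z → Z → Z := fun w w' => (φ (e w * e w')).1 with hmZ
      set mG : G → G → G := fun g g' => (φ (f g * f g')).2 with hmG
      have KZ : ∀ a b : S, (φ (a * b)).1 = mZ (φ a).1 (φ b).1 := by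
        intro a b
        have s1 : (φ (e (φ a).1 * b)).1 = (φ (a * b)).1 := by
          rw [← hx a, PSemiring.right_distrib, hφ]
          exact hZ _ _
        have s2 : (φ (e (φ a).1 * e (φ b).1)).1 = (φ (e (φ a).1 * b)).1 := by
          rw [← hx b, PSemiring.left_distrib, hφ]
          exact hZ _ _
        show (φ (a * b)).1 = (φ (e (φ a).1 * e (φ b).1)).1
        rw [s2, s1]
      have KG : ∀ a b : S, (φ (a * b)).2 = mG (φ a).2 (φ b).2 := by
        intro a b
        have s1 : (φ (a * f (φ b).2)).2 = (φ (a * b)).2 := by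
          rw [← hx' b, PSemiring.left_distrib, hφ]
          show (φ (a * e z0)).2 + (φ (a * b)).2 = (φ (a * b)).2
          rw [EmulR]
          exact (hz _).2
        have s2 : (φ (f (φ a).2 * f (φ b).2)).2 = (φ (a * f (φ b).2)).2 := by
          rw [← hx' a, PSemiring.right_distrib, hφ]
          show (φ (e z0 * f (φ b).2)).2 + (φ (a * f (φ b).2)).2
            = (φ (a * f (φ b).2)).2
          rw [EmulL]
          exact (hz _).2
        show (φ (a * b)).2 = (φ (f (φ a).2 * f (φ b).2)).2
        rw [s2, s1]
      -- complete regularity gives idempotency of mZ on the diagonal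
      have mZidem : ∀ w : Z, mZ w w = w := by
        intro w
        obtain ⟨x, h1, h2, h3⟩ := hCR (e w)
        have hgx : (φ x).2 = z := by
          have h := congrArg (fun s => (φ s).2) h1
          simp only [hφ, snd_add, he] at h
          exact cancel (cancelr h.symm)
        have hex : e w + x = e w := by
          apply φ.injective
          rw [hφ, he]
          refine Prod.ext ?_ ?_
          · show w + (φ x).1 = w
            exact hZ _ _
          · show z + (φ x).2 = z
            rw [hgx, (hz z).1]
        rw [hex] at h3
        have h := congrArg (fun s => (φ s).1) h3
        simp only [KZ, he] at h
        exact h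
      -- build the two semirings
      letI instL : PSemiring Z :=
        { toAdd := addZ, toMul := ⟨mZ⟩,
          add_assoc := fun a b c => by
            show (a + b) + c = a + (b + c)
            rw [hZ, hZ, hZ]
          mul_assoc := fun w1 w2 w3 => by
            show mZ (mZ w1 w2) w3 = mZ w1 (mZ w2 w3)
            have e12 : (φ (e w1 * e w2)).1 = mZ w1 w2 := by rw [KZ, he, he]
            have e23 : (φ (e w2 * e w3)).1 = mZ w2 w3 := by rw [KZ, he, he]
            have l : (φ ((e w1 * e w2) * e w3)).1 = mZ (mZ w1 w2) w3 := by
              rw [KZ, e12, he]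
            have r : (φ (e w1 * (e w2 * e w3))).1 = mZ w1 (mZ w2 w3) := by
              rw [KZ, e23, he]
            rw [← l, ← r, PSemiring.mul_assoc]
          left_distrib := fun a b c => by
            show mZ a (b + c) = mZ a b + mZ a c
            rw [hZ, hZ]
          right_distrib := fun a b c => by
            show mZ (a + b) c = mZ a c + mZ b c
            rw [hZ, hZ] }
      letI instG2 : PSemiring G :=
        { toAdd := addG, toMul := ⟨mG⟩,
          add_assoc := hGassoc
          mul_assoc := fun g1 g2 g3 => by
            show mG (mG g1 g2) g3 = mG g1 (mG g2 g3)
            have e12 : (φ (f g1 * f g2)).2 = mG g1 g2 := by rw [KG, hf, hf]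
            have e23 : (φ (f g2 * f g3)).2 = mG g2 g3 := by rw [KG, hf, hf]
            have l : (φ ((f g1 * f g2) * f g3)).2 = mG (mG g1 g2) g3 := by
              rw [KG, e12, hf]
            have r : (φ (f g1 * (f g2 * f g3))).2 = mG g1 (mG g2 g3) := by
              rw [KG, e23, hf]
            rw [← l, ← r, PSemiring.mul_assoc]
          left_distrib := fun g1 g2 g3 => by
            show mG g1 (g2 + g3) = mG g1 g2 + mG g1 g3
            have h23 : (φ (f g2 + f g3)).2 = g2 + g3 := by
              rw [hφ, snd_add, hf, hf]
            have l : (φ (f g1 * (f g2 + f g3))).2 = mG g1 (g2 + g3) := by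
              rw [KG, h23, hf]
            have r : (φ (f g1 * f g2 + f g1 * f g3)).2 = mG g1 g2 + mG g1 g3 := by
              rw [hφ]
              show (φ (f g1 * f g2)).2 + (φ (f g1 * f g3)).2 = _
              rw [KG, KG, hf, hf, hf]
            rw [← l, ← r, PSemiring.left_distrib]
          right_distrib := fun g1 g2 g3 => by
            show mG (g1 + g2) g3 = mG g1 g3 + mG g2 g3
            have h12 : (φ (f g1 + f g2)).2 = g1 + g2 := by
              rw [hφ, snd_add, hf, hf]
            have l : (φ ((f g1 + f g2) * f g3)).2 = mG (g1 + g2) g3 := by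
              rw [KG, h12, hf]
            have r : (φ (f g1 * f g3 + f g2 * f g3)).2 = mG g1 g3 + mG g2 g3 := by
              rw [hφ]
              show (φ (f g1 * f g3)).2 + (φ (f g2 * f g3)).2 = _
              rw [KG, KG, hf, hf, hf]
            rw [← l, ← r, PSemiring.right_distrib] }
      refine ⟨Z, G, instL, instG2, ⟨mZidem, hZ⟩,
        ⟨z, hz, fun a => ⟨neg a, hneg1 a, hneg2 a⟩⟩,
        ⟨⟨φ, hφ, ?_⟩⟩⟩
      intro a b
      show φ (a * b) = (mZ (φ a).1 (φ b).1, mG (φ a).2 (φ b).2)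
      exact Prod.ext (KZ a b) (KG a b)
    · -- S is empty
      haveI hSe : IsEmpty S := not_nonempty_iff.mp hS
      have hZe : ∀ w : Z, False := fun w => hSe.false (φ.symm (w, z))
      letI instL : PSemiring Z :=
        { toAdd := addZ, toMul := ⟨fun a _ => a⟩,
          add_assoc := fun a _ _ => (hZe a).elim
          mul_assoc := fun _ _ _ => rfl
          left_distrib := fun a _ _ => (hZe a).elim
          right_distrib := fun a _ _ => (hZe a).elim }
      letI instG2 : PSemiring G :=
        { toAdd := addG, toMul := ⟨fun _ _ => z⟩,
          add_assoc := hGassoc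
          mul_assoc := fun _ _ _ => rfl
          left_distrib := fun _ _ _ => ((hz z).1).symm
          right_distrib := fun _ _ _ => ((hz z).1).symm }
      refine ⟨Z, G, instL, instG2,
        ⟨fun a => rfl, hZ⟩,
        ⟨z, hz, fun a => ⟨neg a, hneg1 a, hneg2 a⟩⟩,
        ⟨⟨φ, hφ, fun a => (hSe.false a).elim⟩⟩⟩
end
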